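/- arXiv:2007.14508 — 3 statements merged into one kernel-verified Lean document; each statement's English description precedes it below -/
import Mathlib

section
/- For every integer d ≥ 1 and every ε > 0 there exists β > 0, depending only on d and ε, with the following property: for every measurable f : [0,1]^2 → [0,1], if g denotes the constant function on [0,1]^2 with value ‖f‖_d and d_□(f,g) ≥ ε, then λ(A^+_β(f^d, ‖f‖_d^d)) ≥ β and λ(A^-_β(f^d, ‖f‖_d^d)) ≥ β, where f^d denotes the function (x,y) ↦ f(x,y)^d. -/
open MeasureTheory Set Filter
open scoped ENNReal NNReal

noncomputable section

namespace GraphonLDP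

/-- The unit square `[0,1]² ⊆ ℝ²`. -/
def unitSq : Set (ℝ × ℝ) := Set.Icc (0:ℝ) 1 ×ˢ Set.Icc (0:ℝ) 1

/-- A graphon: a measurable, symmetric function with values in `[0,1]`. -/
def IsGraphon (f : ℝ → ℝ → ℝ) : Prop :=
  Measurable (Function.uncurry f) ∧ (∀ x y, f x y ∈ Set.Icc (0:ℝ) 1) ∧ ∀ x y, f x y = f y x

open Classical in
/-- The pointwise relative entropy `h_p(u)`, valued in `[0,∞]`
(with `h_0(0) = h_1(1) = 0`, `h_0(u) = ∞` for `u ≠ 0`, `h_1(u) = ∞` for `u ≠ 1`,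
and the convention `0 log 0 = 0`, which is automatic since `Real.log 0 = 0`). -/
def relEnt (p u : ℝ) : ℝ≥0∞ :=
  if p = 0 then (if u = 0 then 0 else ⊤)
  else if p = 1 then (if u = 1 then 0 else ⊤)
  else ENNReal.ofReal (u * Real.log (u / p) + (1 - u) * Real.log ((1 - u) / (1 - p)))

/-- The relative entropy functional `I_{W₀}(f)`, valued in `[0,∞]`. -/
def Ient (W₀ f : ℝ → ℝ → ℝ) : ℝ≥0∞ :=
  (1 / 2) * ∫⁻ q in unitSq, relEnt (W₀ q.1 q.2) (f q.1 q.2)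

/-- `Ω = {(x,y) ∈ [0,1]² : 0 < W₀(x,y) < 1}`. -/
def OmegaSet (W₀ : ℝ → ℝ → ℝ) : Set (ℝ × ℝ) :=
  {q | q ∈ unitSq ∧ W₀ q.1 q.2 ∈ Set.Ioo (0:ℝ) 1}

/-- `f ∈ W_Ω`: `f` is a graphon agreeing with `W₀` a.e. on `[0,1]² \ Ω`. -/
def MemWOmega (W₀ f : ℝ → ℝ → ℝ) : Prop :=
  IsGraphon f ∧
    ∀ᵐ q ∂(volume.restrict (unitSq \ OmegaSet W₀)), f q.1 q.2 = W₀ q.1 q.2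

/-- The cut distance `d_□(f,g)`. -/
def cutDist (f g : ℝ → ℝ → ℝ) : ℝ :=
  ⨆ p : {S : Set ℝ // MeasurableSet S ∧ S ⊆ Set.Icc (0:ℝ) 1} ×
        {T : Set ℝ // MeasurableSet T ∧ T ⊆ Set.Icc (0:ℝ) 1},
    |∫ q in ((p.1 : Set ℝ) ×ˢ (p.2 : Set ℝ)), (f q.1 q.2 - g q.1 q.2)|

/-- The set of values of `W₀` on the unit square. -/
def imageVals (W₀ : ℝ → ℝ → ℝ) : Set ℝ := {w : ℝ | ∃ q ∈ unitSq, W₀ q.1 q.2 = w}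

/-- Real-valued relative entropy `h_p(u)` for `p ∈ (0,1)`. -/
def hRel (p u : ℝ) : ℝ :=
  u * Real.log (u / p) + (1 - u) * Real.log ((1 - u) / (1 - p))

/-- `ψ_p(x) = h_p(x^{1/d})`. -/
def psi (d : ℕ) (p : ℝ) : ℝ → ℝ := fun x => hRel p (x ^ ((d : ℝ)⁻¹))

/-- The convex minorant on `[0,1]`: pointwise supremum of affine minorants. -/
def convexMinorant (F : ℝ → ℝ) (x : ℝ) : ℝ :=
  sSup {y : ℝ | ∃ a b : ℝ, (∀ z ∈ Set.Icc (0:ℝ) 1, a * z + b ≤ F z) ∧ y = a * x + b}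

/-- `A⁺_ε(f,c) = {(x,y) ∈ [0,1]² : f(x,y) − c ≥ ε}`. -/
def Aplus (f : ℝ → ℝ → ℝ) (c ε : ℝ) : Set (ℝ × ℝ) :=
  {q | q ∈ unitSq ∧ ε ≤ f q.1 q.2 - c}

/-- `A⁻_ε(f,c) = {(x,y) ∈ [0,1]² : c − f(x,y) ≥ ε}`. -/
def Aminus (f : ℝ → ℝ → ℝ) (c ε : ℝ) : Set (ℝ × ℝ) :=
  {q | q ∈ unitSq ∧ ε ≤ c - f q.1 q.2}

/-- Partial sums `γ_1 + ⋯ + γ_n`. -/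
def cumSum {m : ℕ} (γ : Fin m → ℝ) (n : ℕ) : ℝ :=
  ∑ i : Fin m, if (i : ℕ) < n then γ i else 0

/-- The interval `I_j` of the block structure: `I_1 = [0,γ_1]`,
`I_j = (γ_1+⋯+γ_{j-1}, γ_1+⋯+γ_j]` for `j ≥ 2`. -/
def blockI {m : ℕ} (γ : Fin m → ℝ) (j : Fin m) : Set ℝ :=
  if (j : ℕ) = 0 then Set.Icc 0 (cumSum γ 1)
  else Set.Ioc (cumSum γ (j : ℕ)) (cumSum γ ((j : ℕ) + 1))

/-- `γ` is a vector of positive block widths summing to `1`. -/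
def GoodWidths {m : ℕ} (γ : Fin m → ℝ) : Prop :=
  (∀ i, 0 < γ i) ∧ ∑ i, γ i = 1

/-- `f` is the block graphon in `B^γ` with matrix `P`. -/
def IsBlockGraphon {m : ℕ} (γ : Fin m → ℝ) (P : Fin m → Fin m → ℝ) (f : ℝ → ℝ → ℝ) : Prop :=
  (∀ i j, P i j ∈ Set.Icc (0:ℝ) 1) ∧ (∀ i j, P i j = P j i) ∧
    ∀ i j, ∀ x ∈ blockI γ i, ∀ y ∈ blockI γ j, f x y = P i j

/-- The homomorphism density `t(H,f)`. -/
def homDensity {v : ℕ} (H : SimpleGraph (Fin v)) [DecidableRel H.Adj] (f : ℝ → ℝ → ℝ) : ℝ :=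
  ∫ x in Set.univ.pi (fun _ : Fin v => Set.Icc (0:ℝ) 1),
    ∏ e ∈ Finset.univ.filter (fun e : Fin v × Fin v => e.1 < e.2 ∧ H.Adj e.1 e.2),
      f (x e.1) (x e.2)

/-- `‖g‖_d = (∫_{[0,1]²} g^d)^{1/d}`. -/
def normD (d : ℕ) (g : ℝ → ℝ → ℝ) : ℝ :=
  (∫ q in unitSq, (g q.1 q.2) ^ d) ^ ((d : ℝ)⁻¹)

/-- The rescaled restriction `f_{ij}` of `f` to the block `I_i × I_j`. -/
def fBlock {m : ℕ} (γ : Fin m → ℝ) (f : ℝ → ℝ → ℝ) (i j : Fin m) : ℝ → ℝ → ℝ :=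
  fun x y => f (cumSum γ (i : ℕ) + x * γ i) (cumSum γ (j : ℕ) + y * γ j)

/-- `K_{W₀}(f,a)`. -/
def Kfun (W₀ f a : ℝ → ℝ → ℝ) : ℝ :=
  ∫ q in unitSq,
    (a q.1 q.2 * f q.1 q.2 -
      Real.log (W₀ q.1 q.2 * Real.exp (a q.1 q.2) + 1 - W₀ q.1 q.2))

/-- Symmetric functions in `L²([0,1]²)`. -/
def SymL2 (a : ℝ → ℝ → ℝ) : Prop :=
  Measurable (Function.uncurry a) ∧
    (∀ᵐ q ∂(volume.restrict unitSq), a q.1 q.2 = a q.2 q.1) ∧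
    IntegrableOn (fun q : ℝ × ℝ => (a q.1 q.2) ^ 2) unitSq

/-- The matrix `P` with the entries `(a,b)` and `(b,a)` replaced by `q`. -/
def modMat {m : ℕ} (P : Fin m → Fin m → ℝ) (a b : Fin m) (q : ℝ) :
    Fin m → Fin m → ℝ :=
  fun i j => if (i = a ∧ j = b) ∨ (i = b ∧ j = a) then q else P i j

/-- The block `I_a × I_b` of the block graphon `W₀ = (P i j)` is relevant:
`P a b > 0` and replacing the entries `P a b = P b a` by any strictly smaller
(nonnegative) value strictly decreases the homomorphism density of `H`. -/
def RelevantBlock {v m : ℕ} (H : SimpleGraph (Fin v)) [DecidableRel H.Adj]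
    (γ : Fin m → ℝ) (P : Fin m → Fin m → ℝ) (W₀ : ℝ → ℝ → ℝ) (a b : Fin m) : Prop :=
  0 < P a b ∧ ∀ q : ℝ, 0 ≤ q → q < P a b →
    ∀ g : ℝ → ℝ → ℝ, IsGraphon g → IsBlockGraphon γ (modMat P a b q) g →
      homDensity H g < homDensity H W₀

open Classical in
/-- `g^{+η}`: equal to `min (g + η) 1` on `Ω` and to `g` off `Ω`. -/
def gplus (W₀ g : ℝ → ℝ → ℝ) (η : ℝ) : ℝ → ℝ → ℝ := fun x y =>
  if (x, y) ∈ OmegaSet W₀ then min (g x y + η) 1 else g x y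

open Classical in
/-- The graphon `f_{a,b,c}^γ`: `a` on `[0,γ]²`, `c` on `(γ,1]²`, `b` elsewhere. -/
def fabc (γ a b c : ℝ) : ℝ → ℝ → ℝ := fun x y =>
  if x ∈ Set.Icc (0:ℝ) γ ∧ y ∈ Set.Icc (0:ℝ) γ then a
  else if x ∈ Set.Ioc γ 1 ∧ y ∈ Set.Ioc γ 1 then c
  else b

/-- Membership in the two-block family `B^{(γ,1-γ)} = {f_{a,b,c}^γ : a,b,c ∈ [0,1]}`. -/
def memB2 (γ : ℝ) (f : ℝ → ℝ → ℝ) : Prop :=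
  ∃ a b c : ℝ, a ∈ Set.Icc (0:ℝ) 1 ∧ b ∈ Set.Icc (0:ℝ) 1 ∧ c ∈ Set.Icc (0:ℝ) 1 ∧
    f = fabc γ a b c

/-- The diagonal blocks `[0,γ]² ∪ (γ,1]²`. -/
def diagBlocks (γ : ℝ) : Set (ℝ × ℝ) :=
  (Set.Icc (0:ℝ) γ ×ˢ Set.Icc (0:ℝ) γ) ∪ (Set.Ioc γ 1 ×ˢ Set.Ioc γ 1)

/-- The operator norm `‖f‖_op = sup {‖T_f u‖₂ : ‖u‖₂ ≤ 1}` of the kernel operator `T_f`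
on `L²([0,1])`. -/
def opNorm (f : ℝ → ℝ → ℝ) : ℝ :=
  sSup {c : ℝ | ∃ u : ℝ → ℝ, Measurable u ∧
    eLpNorm u 2 (volume.restrict (Set.Icc (0:ℝ) 1)) ≤ 1 ∧
    c = (∫ x in Set.Icc (0:ℝ) 1, (∫ y in Set.Icc (0:ℝ) 1, f x y * u y) ^ 2) ^ ((2:ℝ)⁻¹)}

lemma measurableSet_unitSq : MeasurableSet unitSq :=
  measurableSet_Icc.prod measurableSet_Icc

lemma volume_unitSq : volume unitSq = 1 := by
  rw [unitSq, Measure.volume_eq_prod, Measure.prod_prod, Real.volume_Icc]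
  norm_num

instance : IsFiniteMeasure (volume.restrict unitSq) :=
  ⟨by rw [Measure.restrict_apply_univ, volume_unitSq]; exact ENNReal.one_lt_top⟩

lemma integrableOn_bdd {g : ℝ × ℝ → ℝ} (hg : Measurable g) (C : ℝ)
    (hb : ∀ q, |g q| ≤ C) : IntegrableOn g unitSq :=
  Integrable.mono' (integrable_const C) hg.aestronglyMeasurable
    (Filter.Eventually.of_forall fun q => (hb q))

lemma abs_pow_sub_pow_le {a b : ℝ} (ha : 0 ≤ a) (hb : 0 ≤ b) {d : ℕ} (hd : d ≠ 0) :
    |a - b| ^ d ≤ |a ^ d - b ^ d| := by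
  wlog h : b ≤ a generalizing a b
  · rw [abs_sub_comm, abs_sub_comm (a^d)]; exact this hb ha (le_of_not_ge h)
  rw [abs_of_nonneg (sub_nonneg.2 h), abs_of_nonneg (sub_nonneg.2 (pow_le_pow_left₀ hb h d))]
  have h2 := pow_add_pow_le (sub_nonneg.2 h) hb hd
  rw [sub_add_cancel] at h2
  linarith

lemma markov_aux {g : ℝ × ℝ → ℝ} (hg : Measurable g)
    (hg0 : ∀ q, 0 ≤ g q) (hg1 : ∀ q, g q ≤ 1) {t : ℝ} (ht : 0 ≤ t) :
    (∫ q in unitSq, g q) ≤ (volume (unitSq ∩ {q | t ≤ g q})).toReal + t := by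
  have hB : MeasurableSet {q : ℝ × ℝ | t ≤ g q} := measurableSet_le measurable_const hg
  have hint : IntegrableOn g unitSq :=
    integrableOn_bdd hg 1 (fun q => abs_le.2 ⟨by linarith [hg0 q], hg1 q⟩)
  have hsplit := integral_inter_add_diff (μ := volume) (s := unitSq)
      (t := {q : ℝ × ℝ | t ≤ g q}) (f := g) hB hint
  have hS : MeasurableSet (unitSq ∩ {q : ℝ × ℝ | t ≤ g q}) :=
    measurableSet_unitSq.inter hB
  have hfin1 : volume (unitSq ∩ {q : ℝ × ℝ | t ≤ g q}) ≤ 1 :=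
    volume_unitSq ▸ measure_mono inter_subset_left
  have hfin2 : volume (unitSq \ {q : ℝ × ℝ | t ≤ g q}) ≤ 1 :=
    volume_unitSq ▸ measure_mono diff_subset
  have h1 : (∫ q in unitSq ∩ {q : ℝ × ℝ | t ≤ g q}, g q)
      ≤ (volume (unitSq ∩ {q : ℝ × ℝ | t ≤ g q})).toReal := by
    have := setIntegral_mono_on (hint.mono_set inter_subset_left)
      (integrableOn_const (lt_of_le_of_lt hfin1 ENNReal.one_lt_top).ne) hS
      (fun q _ => hg1 q)
    simpa [setIntegral_const, measureReal_def] using this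
  have h2 : (∫ q in unitSq \ {q : ℝ × ℝ | t ≤ g q}, g q)
      ≤ t * (volume (unitSq \ {q : ℝ × ℝ | t ≤ g q})).toReal := by
    have := setIntegral_mono_on (hint.mono_set diff_subset)
      (integrableOn_const (lt_of_le_of_lt hfin2 ENNReal.one_lt_top).ne)
      (measurableSet_unitSq.diff hB)
      (fun q hq => le_of_not_ge hq.2)
    simpa [setIntegral_const, measureReal_def, mul_comm] using this
  have h3 : t * (volume (unitSq \ {q : ℝ × ℝ | t ≤ g q})).toReal ≤ t := by
    have hr : (volume (unitSq \ {q : ℝ × ℝ | t ≤ g q})).toReal ≤ 1 := by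
      rw [← ENNReal.toReal_one]
      exact ENNReal.toReal_mono ENNReal.one_ne_top hfin2
    nlinarith [ENNReal.toReal_nonneg (a := volume (unitSq \ {q : ℝ × ℝ | t ≤ g q}))]
  linarith

lemma lb_aux {g : ℝ × ℝ → ℝ} (hg : Measurable g) (hg0 : ∀ q, 0 ≤ g q) (hg1 : ∀ q, g q ≤ 1)
    {β : ℝ} (hβ : 0 < β) (hint : 2 * β ≤ ∫ q in unitSq, g q) :
    ENNReal.ofReal β ≤ volume (unitSq ∩ {q | β ≤ g q}) := by
  have hm := markov_aux hg hg0 hg1 hβ.le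
  exact ENNReal.ofReal_le_of_le_toReal (by linarith)

/-- if `f` is far in cut distance from the constant `‖f‖_d`, then both
level sets `A^±_β(f^d, ‖f‖_d^d)` have measure at least `β`. -/
theorem stmt6 (d : ℕ) (hd : 1 ≤ d) (ε : ℝ) (hε : 0 < ε) :
    ∃ β > 0, ∀ f : ℝ → ℝ → ℝ, Measurable (Function.uncurry f) →
      (∀ x y, f x y ∈ Set.Icc (0:ℝ) 1) →
      ε ≤ cutDist f (fun _ _ => normD d f) →
      ENNReal.ofReal β ≤ volume (Aplus (fun x y => f x y ^ d) (normD d f ^ d) β) ∧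
        ENNReal.ofReal β ≤ volume (Aminus (fun x y => f x y ^ d) (normD d f ^ d) β) := by
  have hd0 : d ≠ 0 := by omega
  set t : ℝ := ε / 2 with ht
  have htpos : 0 < t := by positivity
  refine ⟨t ^ d * t / 4, by positivity, ?_⟩
  set β : ℝ := t ^ d * t / 4 with hβdef
  have hβpos : 0 < β := by positivity
  intro f hmeas hrange hcut
  set F : ℝ × ℝ → ℝ := Function.uncurry f with hF
  have hF0 : ∀ q, 0 ≤ F q := fun q => (hrange q.1 q.2).1
  have hF1 : ∀ q, F q ≤ 1 := fun q => (hrange q.1 q.2).2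
  set I : ℝ := ∫ q in unitSq, F q ^ d with hI
  have hImeas : Measurable fun q => F q ^ d := hmeas.pow_const d
  have hI0 : 0 ≤ I := setIntegral_nonneg measurableSet_unitSq fun q _ => pow_nonneg (hF0 q) d
  set c : ℝ := normD d f with hcdef
  have hc_eq : c = I ^ ((d:ℝ)⁻¹) := rfl
  have hc0 : 0 ≤ c := by rw [hc_eq]; positivity
  have hcd : c ^ d = I := by
    rw [hc_eq, ← Real.rpow_natCast (I ^ ((d:ℝ)⁻¹)) d, ← Real.rpow_mul hI0,
      inv_mul_cancel₀ (Nat.cast_ne_zero.2 hd0), Real.rpow_one]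
  have hvolfin : volume unitSq < ⊤ := by rw [volume_unitSq]; exact ENNReal.one_lt_top
  have hFdint : IntegrableOn (fun q => F q ^ d) unitSq :=
    integrableOn_bdd hImeas 1 fun q =>
      abs_le.2 ⟨by nlinarith [pow_nonneg (hF0 q) d], pow_le_one₀ (hF0 q) (hF1 q)⟩
  have hI1 : I ≤ 1 := by
    have := setIntegral_mono_on hFdint
      (integrableOn_const hvolfin.ne) measurableSet_unitSq
      (fun q _ => pow_le_one₀ (hF0 q) (hF1 q))
    simpa [setIntegral_const, measureReal_def, volume_unitSq] using this
  have hc1 : c ≤ 1 := by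
    rw [hc_eq]; exact Real.rpow_le_one hI0 hI1 (by positivity)
  have hcd0 : 0 ≤ c ^ d := pow_nonneg hc0 d
  have hcd1 : c ^ d ≤ 1 := pow_le_one₀ hc0 hc1
  -- step 1 : cut distance bound
  have habs_meas : Measurable fun q => |F q - c| := (hmeas.sub measurable_const).abs
  have habs_bd : ∀ q, |F q - c| ≤ 1 := fun q =>
    abs_le.2 ⟨by linarith [hF0 q], by linarith [hF1 q]⟩
  have habs_int : IntegrableOn (fun q => |F q - c|) unitSq :=
    integrableOn_bdd habs_meas 1 fun q => by rw [abs_abs]; exact habs_bd q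
  have hM : ε ≤ ∫ q in unitSq, |F q - c| := by
    refine le_trans hcut (Real.iSup_le ?_ ?_)
    · rintro ⟨⟨S, hSm, hSsub⟩, ⟨T, hTm, hTsub⟩⟩
      have hsub : S ×ˢ T ⊆ unitSq := Set.prod_mono hSsub hTsub
      calc |∫ q in S ×ˢ T, (f q.1 q.2 - c)|
          ≤ ∫ q in S ×ˢ T, |F q - c| := by
            have h := norm_integral_le_integral_norm (μ := volume.restrict (S ×ˢ T))
              (fun q : ℝ × ℝ => f q.1 q.2 - c)
            simpa [Real.norm_eq_abs, hF, Function.uncurry] using h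
        _ ≤ ∫ q in unitSq, |F q - c| :=
            setIntegral_mono_set habs_int
              (Filter.Eventually.of_forall fun q => abs_nonneg _)
              (HasSubset.Subset.eventuallyLE hsub)
    · exact setIntegral_nonneg measurableSet_unitSq fun q _ => abs_nonneg _
  -- step 2 : Markov
  have hmark := markov_aux habs_meas (fun q => abs_nonneg _) habs_bd htpos.le
  set Sset : Set (ℝ × ℝ) := unitSq ∩ {q | t ≤ |F q - c|} with hSset
  have hSmeas : MeasurableSet Sset :=
    measurableSet_unitSq.inter (measurableSet_le measurable_const habs_meas)
  have hSvol : t ≤ (volume Sset).toReal := by rw [ht]; linarith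
  have hSfin : volume Sset < ⊤ :=
    lt_of_le_of_lt (measure_mono inter_subset_left) hvolfin
  -- step 3 : lower bound on ∫ |D|
  set D : ℝ × ℝ → ℝ := fun q => F q ^ d - c ^ d with hD
  have hDmeas : Measurable D := hImeas.sub measurable_const
  have hDbd : ∀ q, |D q| ≤ 1 := fun q => by
    have h1 := pow_nonneg (hF0 q) d
    have h2 : F q ^ d ≤ 1 := pow_le_one₀ (hF0 q) (hF1 q)
    have hDq : D q = F q ^ d - c ^ d := rfl
    rw [abs_le, hDq]
    constructor <;> linarith
  have hDint : IntegrableOn D unitSq := integrableOn_bdd hDmeas 1 hDbd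
  have hDabs_int : IntegrableOn (fun q => |D q|) unitSq :=
    integrableOn_bdd hDmeas.abs 1 fun q => by rw [abs_abs]; exact hDbd q
  have hpt : ∀ q ∈ Sset, t ^ d ≤ |D q| := fun q hq =>
    calc t ^ d ≤ |F q - c| ^ d := pow_le_pow_left₀ htpos.le hq.2 d
      _ ≤ |F q ^ d - c ^ d| := abs_pow_sub_pow_le (hF0 q) hc0 hd0
  have hlow : t ^ d * t ≤ ∫ q in unitSq, |D q| := by
    have h1 : t ^ d * (volume Sset).toReal ≤ ∫ q in Sset, |D q| := by
      have := setIntegral_mono_on (integrableOn_const hSfin.ne)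
        (hDabs_int.mono_set inter_subset_left) hSmeas hpt
      simpa [setIntegral_const, measureReal_def, mul_comm] using this
    have h2 : ∫ q in Sset, |D q| ≤ ∫ q in unitSq, |D q| :=
      setIntegral_mono_set hDabs_int
        (Filter.Eventually.of_forall fun q => abs_nonneg _)
        (HasSubset.Subset.eventuallyLE inter_subset_left)
    have h3 : t ^ d * t ≤ t ^ d * (volume Sset).toReal :=
      mul_le_mul_of_nonneg_left hSvol (by positivity)
    linarith
  -- step 4 : ∫ D = 0
  have hDint0 : ∫ q in unitSq, D q = 0 := by
    rw [hD]
    rw [integral_sub hFdint (integrableOn_const hvolfin.ne)]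
    rw [setIntegral_const, measureReal_def, volume_unitSq, ENNReal.toReal_one, one_smul, hcd, ← hI, sub_self]
  -- step 5 : positive and negative parts
  have hPmeas : Measurable fun q => max (D q) 0 := hDmeas.max measurable_const
  have hNmeas : Measurable fun q => max (-D q) 0 := hDmeas.neg.max measurable_const
  have hPint : IntegrableOn (fun q => max (D q) 0) unitSq :=
    integrableOn_bdd hPmeas 1 fun q => by
      rw [abs_of_nonneg (le_max_right _ _)]
      exact max_le (le_trans (le_abs_self _) (hDbd q)) zero_le_one
  have hNint : IntegrableOn (fun q => max (-D q) 0) unitSq :=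
    integrableOn_bdd hNmeas 1 fun q => by
      rw [abs_of_nonneg (le_max_right _ _)]
      exact max_le (le_trans (le_trans (neg_le_abs _) (le_refl _)) (hDbd q)) zero_le_one
  set P : ℝ := ∫ q in unitSq, max (D q) 0 with hP
  set N : ℝ := ∫ q in unitSq, max (-D q) 0 with hN
  have key : ∀ x : ℝ, max x 0 - max (-x) 0 = x := fun x => by
    rcases le_total x 0 with h | h
    · rw [max_eq_right h, max_eq_left (neg_nonneg.2 h)]; ring
    · rw [max_eq_left h, max_eq_right (neg_nonpos.2 h)]; ring
  have key2 : ∀ x : ℝ, max x 0 + max (-x) 0 = |x| := fun x => by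
    rcases le_total x 0 with h | h
    · rw [max_eq_right h, max_eq_left (neg_nonneg.2 h), abs_of_nonpos h]; ring
    · rw [max_eq_left h, max_eq_right (neg_nonpos.2 h), abs_of_nonneg h]; ring
  have hPN_sub : P - N = 0 := by
    rw [hP, hN, ← integral_sub hPint hNint]
    simp only [key]
    exact hDint0
  have hPN_add : P + N = ∫ q in unitSq, |D q| := by
    rw [hP, hN, ← integral_add hPint hNint]
    simp only [key2]
  have hPge : 2 * β ≤ P := by rw [hβdef]; linarith
  have hNge : 2 * β ≤ N := by rw [hβdef]; linarith
  constructor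
  · have := lb_aux hPmeas (fun q => le_max_right _ _)
      (fun q => max_le (le_trans (le_abs_self _) (hDbd q)) zero_le_one) hβpos hPge
    refine le_trans this (le_of_eq ?_)
    congr 1
    ext q
    simp only [Aplus, Set.mem_inter_iff, Set.mem_setOf_eq, le_max_iff]
    constructor
    · rintro ⟨h1, h2 | h2⟩
      · exact ⟨h1, h2⟩
      · exact absurd h2 (not_le.2 hβpos)
    · rintro ⟨h1, h2⟩; exact ⟨h1, Or.inl h2⟩
  · have := lb_aux hNmeas (fun q => le_max_right _ _)
      (fun q => max_le (le_trans (neg_le_abs _) (hDbd q)) zero_le_one) hβpos hNge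
    refine le_trans this (le_of_eq ?_)
    congr 1
    ext q
    simp only [Aminus, Set.mem_inter_iff, Set.mem_setOf_eq, le_max_iff, hD, hF,
      Function.uncurry]
    constructor
    · rintro ⟨h1, h2 | h2⟩
      · exact ⟨h1, by linarith⟩
      · exact absurd h2 (not_le.2 hβpos)
    · rintro ⟨h1, h2⟩; exact ⟨h1, Or.inl (by linarith)⟩

end GraphonLDP
end
end

section
/- Let H be a d-regular finite simple graph with d ≥ 1, let γ_1,…,γ_m be positive reals summing to 1, and let f be a graphon. Let f* ∈ B^γ be the d-averaged block-constant graphon, taking the constant value ‖f_{ij}‖_d on each block I_i × I_j. Then t(H,f) ≤ t(H,f*). -/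
open MeasureTheory Set Filter
open scoped ENNReal NNReal

noncomputable section

namespace GraphonLDP

/-! ### Auxiliary lemmas for Statement 8 -/

section CumSum

variable {m : ℕ}

lemma cumSum_zero (γ : Fin m → ℝ) : cumSum γ 0 = 0 := by simp [cumSum]

lemma cumSum_succ (γ : Fin m → ℝ) (j : Fin m) :
    cumSum γ ((j : ℕ) + 1) = cumSum γ (j : ℕ) + γ j := by
  classical
  unfold cumSum
  have h : ∀ i : Fin m, (if (i : ℕ) < (j : ℕ) + 1 then γ i else 0)
      = (if (i : ℕ) < (j : ℕ) then γ i else 0) + (if i = j then γ i else 0) := by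
    intro i
    rcases lt_trichotomy ((i : ℕ)) ((j : ℕ)) with h | h | h
    · have hij : i ≠ j := fun hh => by simp [hh] at h
      rw [if_pos (Nat.lt_succ_of_lt h), if_pos h, if_neg hij, add_zero]
    · have hij : i = j := Fin.ext h
      subst hij
      rw [if_pos (Nat.lt_succ_self _), if_neg (lt_irrefl _), if_pos rfl, zero_add]
    · have h1 : ¬(i : ℕ) < (j : ℕ) + 1 := by omega
      have hij : i ≠ j := fun hh => by simp [hh] at h
      rw [if_neg h1, if_neg (by omega : ¬(i : ℕ) < (j : ℕ)), if_neg hij, add_zero]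
  rw [Finset.sum_congr rfl fun i _ => h i, Finset.sum_add_distrib,
    Finset.sum_ite_eq' Finset.univ j γ]
  simp

lemma cumSum_mono (γ : Fin m → ℝ) (hγ : ∀ i, 0 ≤ γ i) {a b : ℕ} (hab : a ≤ b) :
    cumSum γ a ≤ cumSum γ b := by
  refine Finset.sum_le_sum fun i _ => ?_
  by_cases h : (i : ℕ) < a
  · rw [if_pos h, if_pos (lt_of_lt_of_le h hab)]
  · rw [if_neg h]
    split_ifs with h2
    · exact hγ i
    · exact le_rfl

lemma cumSum_total (γ : Fin m → ℝ) : cumSum γ m = ∑ i, γ i := by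
  unfold cumSum
  exact Finset.sum_congr rfl fun i _ => if_pos i.isLt

lemma cumSum_nonneg (γ : Fin m → ℝ) (hγ : ∀ i, 0 ≤ γ i) (n : ℕ) : 0 ≤ cumSum γ n := by
  have := cumSum_mono γ hγ (Nat.zero_le n)
  rwa [cumSum_zero] at this

lemma cumSum_le_one {γ : Fin m → ℝ} (hγ : GoodWidths γ) {n : ℕ} (hn : n ≤ m) :
    cumSum γ n ≤ 1 := by
  have := cumSum_mono γ (fun i => (hγ.1 i).le) hn
  rwa [cumSum_total, hγ.2] at this

lemma blockI_measurable (γ : Fin m → ℝ) (j : Fin m) : MeasurableSet (blockI γ j) := by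
  unfold blockI
  split_ifs
  exacts [measurableSet_Icc, measurableSet_Ioc]

lemma blockI_subset {γ : Fin m → ℝ} (hγ : GoodWidths γ) (j : Fin m) :
    blockI γ j ⊆ Set.Icc (0 : ℝ) 1 := by
  have hjm := j.isLt
  have h0 : ∀ n : ℕ, 0 ≤ cumSum γ n := cumSum_nonneg γ fun i => (hγ.1 i).le
  unfold blockI
  split_ifs with h
  · intro x hx
    exact ⟨hx.1, hx.2.trans (cumSum_le_one hγ (by omega))⟩
  · intro x hx
    exact ⟨(h0 _).trans hx.1.le, hx.2.trans (cumSum_le_one hγ (by omega))⟩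

lemma blockI_upper {γ : Fin m → ℝ} (i : Fin m) {x : ℝ} (hx : x ∈ blockI γ i) :
    x ≤ cumSum γ ((i : ℕ) + 1) := by
  unfold blockI at hx
  split_ifs at hx with h
  · rw [h]
    exact hx.2
  · exact hx.2

lemma blockI_lower {γ : Fin m → ℝ} {i : Fin m} (hi : (i : ℕ) ≠ 0) {x : ℝ}
    (hx : x ∈ blockI γ i) : cumSum γ (i : ℕ) < x := by
  unfold blockI at hx
  rw [if_neg hi] at hx
  exact hx.1

lemma blockI_disjoint {γ : Fin m → ℝ} (hγ : GoodWidths γ) (i j : Fin m) (hij : i ≠ j) :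
    Disjoint (blockI γ i) (blockI γ j) := by
  have key : ∀ a b : Fin m, (a : ℕ) < (b : ℕ) → Disjoint (blockI γ a) (blockI γ b) := by
    intro a b hab
    refine Set.disjoint_left.mpr fun x hxa hxb => ?_
    have h1 : x ≤ cumSum γ ((a : ℕ) + 1) := blockI_upper a hxa
    have h2 : cumSum γ (b : ℕ) < x := blockI_lower (by omega) hxb
    have h3 : cumSum γ ((a : ℕ) + 1) ≤ cumSum γ (b : ℕ) :=
      cumSum_mono γ (fun i => (hγ.1 i).le) (by omega)
    linarith
  rcases lt_trichotomy ((i : ℕ)) ((j : ℕ)) with h | h | h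
  · exact key i j h
  · exact absurd (Fin.ext h) hij
  · exact (key j i h).symm

lemma blockI_cover {γ : Fin m → ℝ} (hγ : GoodWidths γ) (hm : 0 < m) {x : ℝ}
    (hx : x ∈ Set.Icc (0 : ℝ) 1) : ∃ j : Fin m, x ∈ blockI γ j := by
  classical
  have hw : x ≤ cumSum γ ((m - 1) + 1) := by
    rw [(by omega : m - 1 + 1 = m), cumSum_total, hγ.2]
    exact hx.2
  have hP : ∃ n, x ≤ cumSum γ (n + 1) := ⟨m - 1, hw⟩
  have hle : Nat.find hP ≤ m - 1 := Nat.find_min' hP hw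
  set n := Nat.find hP with hn
  have hn1 : x ≤ cumSum γ (n + 1) := Nat.find_spec hP
  have hnm : n < m := by omega
  refine ⟨⟨n, hnm⟩, ?_⟩
  unfold blockI
  by_cases hn0 : n = 0
  · rw [if_pos (by simpa using hn0)]
    refine ⟨hx.1, ?_⟩
    simpa [hn0] using hn1
  · rw [if_neg (by simpa using hn0)]
    constructor
    · have hmin := Nat.find_min hP (m := n - 1) (by omega)
      rw [(by omega : n - 1 + 1 = n)] at hmin
      simpa using lt_of_not_ge hmin
    · simpa using hn1

lemma volume_blockI {γ : Fin m → ℝ} (hγ : GoodWidths γ) (j : Fin m) :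
    volume (blockI γ j) = ENNReal.ofReal (γ j) := by
  unfold blockI
  split_ifs with h
  · rw [Real.volume_Icc]
    congr 1
    have h0 : cumSum γ (j : ℕ) = 0 := by rw [h, cumSum_zero]
    have hs := cumSum_succ γ j
    rw [h0] at hs
    rw [h] at hs
    rw [zero_add, zero_add] at hs
    linarith
  · rw [Real.volume_Ioc, cumSum_succ γ j]
    congr 1
    ring

lemma restrict_blockI (γ : Fin m → ℝ) (j : Fin m) :
    volume.restrict (blockI γ j)
      = volume.restrict (Set.Icc (cumSum γ (j : ℕ)) (cumSum γ (j : ℕ) + γ j)) := by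
  unfold blockI
  split_ifs with h
  · have h0 : cumSum γ (j : ℕ) = 0 := by rw [h, cumSum_zero]
    have h1 : cumSum γ 1 = γ j := by
      have hs := cumSum_succ γ j
      rw [h0] at hs
      rw [h] at hs
      rw [zero_add, zero_add] at hs
      exact hs
    rw [h1, h0, zero_add]
  · rw [cumSum_succ γ j]
    exact Measure.restrict_congr_set Ioc_ae_eq_Icc

end CumSum

section ChangeOfVar

/-- One-dimensional affine change of variables for lower integrals. -/
lemma lintegral_Icc_affine {c g : ℝ} (hg : 0 < g) {h : ℝ → ℝ≥0∞} (hh : Measurable h) :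
    ∫⁻ x in Set.Icc c (c + g), h x
      = ENNReal.ofReal g * ∫⁻ u in Set.Icc (0 : ℝ) 1, h (c + u * g) := by
  have hφ : Measurable fun u : ℝ => c + u * g :=
    (measurable_id.mul_const g).const_add c
  have hcomp : (fun u : ℝ => c + u * g) = (fun x : ℝ => c + x) ∘ (fun u : ℝ => g * u) := by
    funext u; simp [mul_comm]
  have hmap : Measure.map (fun u : ℝ => c + u * g) volume
      = ENNReal.ofReal g⁻¹ • (volume : Measure ℝ) := by
    rw [hcomp, ← Measure.map_map (measurable_const_add c) (measurable_const_mul g),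
      Real.map_volume_mul_left hg.ne', Measure.map_smul,
      (measurePreserving_add_left volume c).map_eq, abs_of_pos (inv_pos.mpr hg)]
  have hvol : (ENNReal.ofReal g) • Measure.map (fun u : ℝ => c + u * g) volume = volume := by
    rw [hmap, smul_smul, ← ENNReal.ofReal_mul hg.le, mul_inv_cancel₀ hg.ne',
      ENNReal.ofReal_one, one_smul]
  have hind : Measurable ((Set.Icc c (c + g)).indicator h) :=
    hh.indicator measurableSet_Icc
  calc ∫⁻ x in Set.Icc c (c + g), h x
      = ∫⁻ x, (Set.Icc c (c + g)).indicator h x ∂volume :=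
        (lintegral_indicator measurableSet_Icc h).symm
    _ = ∫⁻ x, (Set.Icc c (c + g)).indicator h x
          ∂((ENNReal.ofReal g) • Measure.map (fun u : ℝ => c + u * g) volume) := by
        rw [hvol]
    _ = ENNReal.ofReal g * ∫⁻ x, (Set.Icc c (c + g)).indicator h x
          ∂(Measure.map (fun u : ℝ => c + u * g) volume) := lintegral_smul_measure _ _
    _ = ENNReal.ofReal g * ∫⁻ u, (Set.Icc c (c + g)).indicator h (c + u * g) ∂volume := by
        rw [lintegral_map hind hφ]
    _ = ENNReal.ofReal g
          * ∫⁻ u, (Set.Icc (0 : ℝ) 1).indicator (fun u => h (c + u * g)) u ∂volume := by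
        congr 1
        refine lintegral_congr fun u => ?_
        by_cases hu : u ∈ Set.Icc (0 : ℝ) 1
        · have hmem : c + u * g ∈ Set.Icc c (c + g) :=
            ⟨by nlinarith [hu.1, hu.2], by nlinarith [hu.1, hu.2]⟩
          rw [Set.indicator_of_mem hmem, Set.indicator_of_mem hu]
        · have hmem : c + u * g ∉ Set.Icc c (c + g) := by
            intro hmem
            refine hu ⟨?_, ?_⟩
            · nlinarith [hmem.1]
            · nlinarith [hmem.2]
          rw [Set.indicator_of_notMem hmem, Set.indicator_of_notMem hu]
    _ = ENNReal.ofReal g * ∫⁻ u in Set.Icc (0 : ℝ) 1, h (c + u * g) := by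
        rw [lintegral_indicator measurableSet_Icc]

end ChangeOfVar

section PiRestrict

lemma pi_restrict {ι : Type*} [Fintype ι] {S : ι → Set ℝ} (hS : ∀ i, MeasurableSet (S i)) :
    (volume : Measure (ι → ℝ)).restrict (Set.univ.pi S)
      = Measure.pi fun i => volume.restrict (S i) := by
  rw [volume_pi]
  refine (Measure.pi_eq (μ := fun i => volume.restrict (S i)) fun t ht => ?_).symm
  rw [Measure.restrict_apply (MeasurableSet.univ_pi ht), ← Set.pi_inter_distrib,
    Measure.pi_pi]
  exact Finset.prod_congr rfl fun i _ => (Measure.restrict_apply (ht i)).symm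

end PiRestrict

section Finner

variable {ι : Type*} [DecidableEq ι] {α : Type*} [MeasurableSpace α]

/-- Partially-integrated edge factors used in the inductive proof of Finner's inequality. -/
def finnerG (μ : ι → Measure α) (d : ℕ) (g : ι × ι → α → α → ℝ≥0∞) (t : Finset ι)
    (e : ι × ι) (x : ι → α) : ℝ≥0∞ :=
  if e.1 ∈ t then
    (if e.2 ∈ t then (∫⁻ a, ∫⁻ b, g e a b ^ d ∂(μ e.2) ∂(μ e.1)) ^ ((d : ℝ)⁻¹)
     else (∫⁻ a, g e a (x e.2) ^ d ∂(μ e.1)) ^ ((d : ℝ)⁻¹))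
  else
    (if e.2 ∈ t then (∫⁻ b, g e (x e.1) b ^ d ∂(μ e.2)) ^ ((d : ℝ)⁻¹)
     else g e (x e.1) (x e.2))

lemma finnerG_le_one {μ : ι → Measure α} (hμ : ∀ i, μ i Set.univ ≤ 1) (d : ℕ)
    {g : ι × ι → α → α → ℝ≥0∞} (hg1 : ∀ e a b, g e a b ≤ 1) (t : Finset ι)
    (e : ι × ι) (x : ι → α) : finnerG μ d g t e x ≤ 1 := by
  have hpow : ∀ (a b : α), g e a b ^ d ≤ 1 := fun a b => pow_le_one' (hg1 e a b) d
  have hint : ∀ (i : ι) (b : α), ∫⁻ a, g e a b ^ d ∂(μ i) ≤ 1 := fun i b =>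
    (lintegral_mono fun a => hpow a b).trans (by rw [lintegral_one]; exact hμ i)
  have hint2 : ∀ (i : ι) (a : α), ∫⁻ b, g e a b ^ d ∂(μ i) ≤ 1 := fun i a =>
    (lintegral_mono fun b => hpow a b).trans (by rw [lintegral_one]; exact hμ i)
  have hr : ∀ z : ℝ≥0∞, z ≤ 1 → z ^ ((d : ℝ)⁻¹) ≤ 1 := fun z hz => by
    calc z ^ ((d : ℝ)⁻¹) ≤ 1 ^ ((d : ℝ)⁻¹) := ENNReal.rpow_le_rpow hz (by positivity)
      _ = 1 := ENNReal.one_rpow _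
  unfold finnerG
  split_ifs
  · refine hr _ ((lintegral_mono fun a => hint2 e.2 a).trans ?_)
    rw [lintegral_one]; exact hμ e.1
  · exact hr _ (hint e.1 (x e.2))
  · exact hr _ (hint2 e.2 (x e.1))
  · exact hg1 e (x e.1) (x e.2)

lemma finnerG_measurable (μ : ι → Measure α) [∀ i, SigmaFinite (μ i)] (d : ℕ)
    {g : ι × ι → α → α → ℝ≥0∞} (hg : ∀ e, Measurable (Function.uncurry (g e)))
    (t : Finset ι) (e : ι × ι) : Measurable (finnerG μ d g t e) := by
  have hrpow : Measurable fun z : ℝ≥0∞ => z ^ ((d : ℝ)⁻¹) :=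
    ENNReal.continuous_rpow_const.measurable
  unfold finnerG
  split_ifs with h1 h2 h2
  · exact measurable_const
  · refine hrpow.comp ?_
    have hbase : Measurable fun b => ∫⁻ a, g e a b ^ d ∂(μ e.1) :=
      Measurable.lintegral_prod_left ((hg e).pow_const d)
    exact hbase.comp (measurable_pi_apply e.2)
  · refine hrpow.comp ?_
    have hbase : Measurable fun a => ∫⁻ b, g e a b ^ d ∂(μ e.2) :=
      Measurable.lintegral_prod_right ((hg e).pow_const d)
    exact hbase.comp (measurable_pi_apply e.1)
  · have hpair : Measurable fun x : ι → α => (x e.1, x e.2) :=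
      (measurable_pi_apply e.1).prodMk (measurable_pi_apply e.2)
    exact (hg e).comp hpair

lemma finnerG_update_ne (μ : ι → Measure α) (d : ℕ) (g : ι × ι → α → α → ℝ≥0∞)
    (t : Finset ι) {e : ι × ι} {w : ι} (h1 : e.1 ≠ w) (h2 : e.2 ≠ w) (x : ι → α) (y : α) :
    finnerG μ d g t e (Function.update x w y) = finnerG μ d g t e x := by
  unfold finnerG
  rw [Function.update_of_ne h1, Function.update_of_ne h2]

lemma finnerG_insert_ne (μ : ι → Measure α) (d : ℕ) (g : ι × ι → α → α → ℝ≥0∞)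
    (t : Finset ι) {e : ι × ι} {w : ι} (h1 : e.1 ≠ w) (h2 : e.2 ≠ w) (x : ι → α) :
    finnerG μ d g (insert w t) e x = finnerG μ d g t e x := by
  unfold finnerG
  simp only [Finset.mem_insert, h1, h2, false_or]

lemma ennreal_pow_rpow_inv {d : ℕ} (hd : 1 ≤ d) (z : ℝ≥0∞) :
    (z ^ d) ^ ((d : ℝ)⁻¹) = z := by
  have hd0 : (d : ℝ) ≠ 0 := Nat.cast_ne_zero.mpr (by omega)
  rw [← ENNReal.rpow_natCast z d, ← ENNReal.rpow_mul, mul_inv_cancel₀ hd0, ENNReal.rpow_one]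

lemma ennreal_rpow_inv_pow {d : ℕ} (hd : 1 ≤ d) (z : ℝ≥0∞) :
    (z ^ ((d : ℝ)⁻¹)) ^ d = z := by
  have hd0 : (d : ℝ) ≠ 0 := Nat.cast_ne_zero.mpr (by omega)
  rw [← ENNReal.rpow_natCast (z ^ ((d : ℝ)⁻¹)) d, ← ENNReal.rpow_mul,
    inv_mul_cancel₀ hd0, ENNReal.rpow_one]

lemma finnerG_int (μ : ι → Measure α) [∀ i, SigmaFinite (μ i)] {d : ℕ} (hd : 1 ≤ d)
    (g : ι × ι → α → α → ℝ≥0∞) (hg : ∀ e, Measurable (Function.uncurry (g e)))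
    {t : Finset ι} {w : ι} (hw : w ∉ t) {e : ι × ι} (he : e.1 ≠ e.2)
    (hew : e.1 = w ∨ e.2 = w) (x : ι → α) :
    (∫⁻ y, finnerG μ d g t e (Function.update x w y) ^ d ∂(μ w)) ^ ((d : ℝ)⁻¹)
      = finnerG μ d g (insert w t) e x := by
  rcases hew with h1 | h2
  · subst h1
    have he1t : e.1 ∉ t := hw
    have he2ne : e.2 ≠ e.1 := fun hh => he hh.symm
    by_cases h2t : e.2 ∈ t
    · have hval : ∀ y, finnerG μ d g t e (Function.update x e.1 y)
          = (∫⁻ b, g e y b ^ d ∂(μ e.2)) ^ ((d : ℝ)⁻¹) := by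
        intro y
        unfold finnerG
        rw [if_neg he1t, if_pos h2t, Function.update_self]
      have hrhs : finnerG μ d g (insert e.1 t) e x
          = (∫⁻ a, ∫⁻ b, g e a b ^ d ∂(μ e.2) ∂(μ e.1)) ^ ((d : ℝ)⁻¹) := by
        unfold finnerG
        rw [if_pos (Finset.mem_insert_self e.1 t), if_pos (Finset.mem_insert_of_mem h2t)]
      rw [hrhs]
      congr 1
      refine lintegral_congr fun y => ?_
      rw [hval y, ennreal_rpow_inv_pow hd]
    · have hval : ∀ y, finnerG μ d g t e (Function.update x e.1 y) = g e y (x e.2) := by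
        intro y
        unfold finnerG
        rw [if_neg he1t, if_neg h2t, Function.update_self, Function.update_of_ne he2ne]
      have hrhs : finnerG μ d g (insert e.1 t) e x
          = (∫⁻ a, g e a (x e.2) ^ d ∂(μ e.1)) ^ ((d : ℝ)⁻¹) := by
        unfold finnerG
        rw [if_pos (Finset.mem_insert_self e.1 t),
          if_neg (by
            simp only [Finset.mem_insert, h2t, or_false]
            exact he2ne)]
      rw [hrhs]
      congr 1
      exact lintegral_congr fun y => by rw [hval y]
  · subst h2
    have he2t : e.2 ∉ t := hw
    have he1w : e.1 ≠ e.2 := he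
    by_cases h1t : e.1 ∈ t
    · have hval : ∀ y, finnerG μ d g t e (Function.update x e.2 y)
          = (∫⁻ a, g e a y ^ d ∂(μ e.1)) ^ ((d : ℝ)⁻¹) := by
        intro y
        unfold finnerG
        rw [if_pos h1t, if_neg he2t, Function.update_self]
      have hrhs : finnerG μ d g (insert e.2 t) e x
          = (∫⁻ a, ∫⁻ b, g e a b ^ d ∂(μ e.2) ∂(μ e.1)) ^ ((d : ℝ)⁻¹) := by
        unfold finnerG
        rw [if_pos (Finset.mem_insert_of_mem h1t), if_pos (Finset.mem_insert_self e.2 t)]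
      rw [hrhs]
      have hswap : ∫⁻ y, ∫⁻ a, g e a y ^ d ∂(μ e.1) ∂(μ e.2)
          = ∫⁻ a, ∫⁻ b, g e a b ^ d ∂(μ e.2) ∂(μ e.1) :=
        (lintegral_lintegral_swap (((hg e).pow_const d).aemeasurable)).symm
      rw [← hswap]
      congr 1
      refine lintegral_congr fun y => ?_
      rw [hval y, ennreal_rpow_inv_pow hd]
    · have hval : ∀ y, finnerG μ d g t e (Function.update x e.2 y) = g e (x e.1) y := by
        intro y
        unfold finnerG
        rw [if_neg h1t, if_neg he2t, Function.update_self, Function.update_of_ne he1w]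
      have hrhs : finnerG μ d g (insert e.2 t) e x
          = (∫⁻ b, g e (x e.1) b ^ d ∂(μ e.2)) ^ ((d : ℝ)⁻¹) := by
        unfold finnerG
        rw [if_neg (by
            simp only [Finset.mem_insert, h1t, or_false]
            exact he1w),
          if_pos (Finset.mem_insert_self e.2 t)]
      rw [hrhs]
      congr 1
      exact lintegral_congr fun y => by rw [hval y]

theorem finner_aux (μ : ι → Measure α) [∀ i, SigmaFinite (μ i)]
    (hμ : ∀ i, μ i Set.univ ≤ 1) (d : ℕ) (hd : 1 ≤ d) (E : Finset (ι × ι))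
    (hE : ∀ e ∈ E, e.1 ≠ e.2) (g : ι × ι → α → α → ℝ≥0∞)
    (hg : ∀ e, Measurable (Function.uncurry (g e))) (hg1 : ∀ e a b, g e a b ≤ 1)
    (t : Finset ι)
    (hdeg : ∀ w ∈ t, (E.filter fun e => e.1 = w ∨ e.2 = w).card = d) :
    ∀ x, (∫⋯∫⁻_t, (fun x => ∏ e ∈ E, finnerG μ d g ∅ e x) ∂μ) x
      ≤ ∏ e ∈ E, finnerG μ d g t e x := by
  classical
  have hd0 : (d : ℝ) ≠ 0 := Nat.cast_ne_zero.mpr (by omega)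
  have hFmeas : Measurable fun x => ∏ e ∈ E, finnerG μ d g ∅ e x :=
    Finset.measurable_prod _ fun e _ => finnerG_measurable μ d hg ∅ e
  revert hdeg
  induction t using Finset.induction_on with
  | empty =>
    intro _ x
    rw [lmarginal_empty]
  | @insert w t hw ih =>
    intro hdeg x
    rw [lmarginal_insert _ hFmeas hw]
    have step1 : ∀ y, (∫⋯∫⁻_t, (fun x => ∏ e ∈ E, finnerG μ d g ∅ e x) ∂μ)
        (Function.update x w y) ≤ ∏ e ∈ E, finnerG μ d g t e (Function.update x w y) :=
      fun y => ih (fun u hu => hdeg u (Finset.mem_insert_of_mem hu)) _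
    refine le_trans (lintegral_mono step1) ?_
    set Ew := E.filter fun e => e.1 = w ∨ e.2 = w with hEw
    set Ec := E.filter fun e => ¬(e.1 = w ∨ e.2 = w) with hEc
    set C := ∏ e ∈ Ec, finnerG μ d g t e x with hC
    have hCle : C ≤ 1 :=
      Finset.prod_le_one (fun e _ => zero_le) fun e _ => finnerG_le_one hμ d hg1 t e x
    have hCne : C ≠ ⊤ := ne_top_of_le_ne_top ENNReal.one_ne_top hCle
    have hEcne : ∀ e ∈ Ec, e.1 ≠ w ∧ e.2 ≠ w := by
      intro e he
      have := (Finset.mem_filter.mp he).2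
      push_neg at this
      exact this
    have hsplit : ∀ z : ι → α, ∏ e ∈ E, finnerG μ d g t e z
        = (∏ e ∈ Ew, finnerG μ d g t e z) * ∏ e ∈ Ec, finnerG μ d g t e z := fun z =>
      (Finset.prod_filter_mul_prod_filter_not E _ _).symm
    have hconst : ∀ y, ∏ e ∈ E, finnerG μ d g t e (Function.update x w y)
        = (∏ e ∈ Ew, finnerG μ d g t e (Function.update x w y)) * C := by
      intro y
      rw [hsplit]
      congr 1
      exact Finset.prod_congr rfl fun e he =>
        finnerG_update_ne μ d g t (hEcne e he).1 (hEcne e he).2 x y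
    calc ∫⁻ y, ∏ e ∈ E, finnerG μ d g t e (Function.update x w y) ∂(μ w)
        = ∫⁻ y, (∏ e ∈ Ew, finnerG μ d g t e (Function.update x w y)) * C ∂(μ w) := by
          exact lintegral_congr hconst
      _ = (∫⁻ y, ∏ e ∈ Ew, finnerG μ d g t e (Function.update x w y) ∂(μ w)) * C :=
          lintegral_mul_const' C _ hCne
      _ ≤ (∏ e ∈ Ew, finnerG μ d g (insert w t) e x) * C := by
          refine mul_le_mul_left ?_ C
          have hrw : ∀ y, ∏ e ∈ Ew, finnerG μ d g t e (Function.update x w y)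
              = ∏ e ∈ Ew, ((fun y => finnerG μ d g t e (Function.update x w y) ^ d) y)
                  ^ ((d : ℝ)⁻¹) := fun y =>
            Finset.prod_congr rfl fun e _ => (ennreal_pow_rpow_inv hd _).symm
          have hmeas : ∀ e ∈ Ew, AEMeasurable
              (fun y => finnerG μ d g t e (Function.update x w y) ^ d) (μ w) := by
            intro e _
            exact (((finnerG_measurable μ d hg t e).comp (measurable_update x)).pow_const
              d).aemeasurable
          have hsum : ∑ _e ∈ Ew, (d : ℝ)⁻¹ = 1 := by
            rw [Finset.sum_const, hdeg w (Finset.mem_insert_self w t)]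
            rw [nsmul_eq_mul, mul_inv_cancel₀ hd0]
          have hHold := ENNReal.lintegral_prod_norm_pow_le Ew hmeas hsum
            (fun _ _ => by positivity)
          calc ∫⁻ y, ∏ e ∈ Ew, finnerG μ d g t e (Function.update x w y) ∂(μ w)
              = ∫⁻ y, ∏ e ∈ Ew, ((fun y => finnerG μ d g t e (Function.update x w y) ^ d) y)
                  ^ ((d : ℝ)⁻¹) ∂(μ w) := lintegral_congr hrw
            _ ≤ ∏ e ∈ Ew, (∫⁻ y, finnerG μ d g t e (Function.update x w y) ^ d ∂(μ w))
                  ^ ((d : ℝ)⁻¹) := hHold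
            _ = ∏ e ∈ Ew, finnerG μ d g (insert w t) e x := by
                refine Finset.prod_congr rfl fun e he => ?_
                have heE := Finset.mem_filter.mp he
                exact finnerG_int μ hd g hg hw (hE e heE.1) heE.2 x
      _ = ∏ e ∈ E, finnerG μ d g (insert w t) e x := by
          have h2 : ∏ e ∈ E, finnerG μ d g (insert w t) e x
              = (∏ e ∈ Ew, finnerG μ d g (insert w t) e x)
                * ∏ e ∈ Ec, finnerG μ d g (insert w t) e x :=
            (Finset.prod_filter_mul_prod_filter_not E _ _).symm
          rw [h2, hC]
          congr 1
          exact Finset.prod_congr rfl fun e he =>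
            (finnerG_insert_ne μ d g t (hEcne e he).1 (hEcne e he).2 x).symm

theorem finner [Fintype ι] [Nonempty α] (μ : ι → Measure α) [∀ i, SigmaFinite (μ i)]
    (hμ : ∀ i, μ i Set.univ ≤ 1) (d : ℕ) (hd : 1 ≤ d) (E : Finset (ι × ι))
    (hE : ∀ e ∈ E, e.1 ≠ e.2) (g : ι × ι → α → α → ℝ≥0∞)
    (hg : ∀ e, Measurable (Function.uncurry (g e))) (hg1 : ∀ e a b, g e a b ≤ 1)
    (hdeg : ∀ w, (E.filter fun e => e.1 = w ∨ e.2 = w).card = d) :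
    ∫⁻ x, ∏ e ∈ E, g e (x e.1) (x e.2) ∂(Measure.pi μ)
      ≤ ∏ e ∈ E, (∫⁻ a, ∫⁻ b, g e a b ^ d ∂(μ e.2) ∂(μ e.1)) ^ ((d : ℝ)⁻¹) := by
  classical
  have x0 : ι → α := fun _ => Classical.arbitrary α
  have h0 : ∀ x : ι → α, ∏ e ∈ E, finnerG μ d g ∅ e x = ∏ e ∈ E, g e (x e.1) (x e.2) := by
    intro x
    refine Finset.prod_congr rfl fun e _ => ?_
    unfold finnerG
    simp
  calc ∫⁻ x, ∏ e ∈ E, g e (x e.1) (x e.2) ∂(Measure.pi μ)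
      = (∫⋯∫⁻_Finset.univ, (fun x => ∏ e ∈ E, finnerG μ d g ∅ e x) ∂μ) x0 := by
        rw [← lintegral_eq_lmarginal_univ x0]
        exact lintegral_congr fun x => (h0 x).symm
    _ ≤ ∏ e ∈ E, finnerG μ d g Finset.univ e x0 :=
        finner_aux μ hμ d hd E hE g hg hg1 Finset.univ (fun w _ => hdeg w) x0
    _ = ∏ e ∈ E, (∫⁻ a, ∫⁻ b, g e a b ^ d ∂(μ e.2) ∂(μ e.1)) ^ ((d : ℝ)⁻¹) := by
        refine Finset.prod_congr rfl fun e _ => ?_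
        unfold finnerG
        simp

end Finner

section Combinatorics

lemma degree_filter {v : ℕ} (H : SimpleGraph (Fin v)) [DecidableRel H.Adj] (w : Fin v) :
    ((Finset.univ.filter fun e : Fin v × Fin v => e.1 < e.2 ∧ H.Adj e.1 e.2).filter
      fun e => e.1 = w ∨ e.2 = w).card = H.degree w := by
  classical
  rw [← SimpleGraph.card_neighborFinset_eq_degree]
  refine Finset.card_nbij' (fun e => if e.1 = w then e.2 else e.1)
    (fun u => if w < u then (w, u) else (u, w)) ?_ ?_ ?_ ?_
  · intro e he
    simp only [Finset.mem_coe] at *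
    rw [Finset.mem_filter, Finset.mem_filter] at he
    obtain ⟨⟨-, hlt, hadj⟩, how⟩ := he
    by_cases h1 : e.1 = w
    · rw [if_pos h1, SimpleGraph.mem_neighborFinset]
      exact h1 ▸ hadj
    · rw [if_neg h1, SimpleGraph.mem_neighborFinset]
      have h2 : e.2 = w := how.resolve_left h1
      exact h2 ▸ hadj.symm
  · intro u hu
    simp only [Finset.mem_coe] at *
    rw [SimpleGraph.mem_neighborFinset] at hu
    by_cases h : w < u
    · rw [if_pos h, Finset.mem_filter, Finset.mem_filter]
      exact ⟨⟨Finset.mem_univ _, h, hu⟩, Or.inl rfl⟩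
    · have hne : u ≠ w := hu.ne'
      have hlt : u < w := lt_of_le_of_ne (le_of_not_gt h) hne
      rw [if_neg h, Finset.mem_filter, Finset.mem_filter]
      exact ⟨⟨Finset.mem_univ _, hlt, hu.symm⟩, Or.inr rfl⟩
  · intro e he
    simp only [Finset.mem_coe] at *
    rw [Finset.mem_filter, Finset.mem_filter] at he
    obtain ⟨⟨-, hlt, hadj⟩, how⟩ := he
    by_cases h1 : e.1 = w
    · rw [if_pos h1]
      rw [if_pos (h1 ▸ hlt)]
      exact Prod.ext (h1.symm) rfl
    · have h2 : e.2 = w := how.resolve_left h1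
      rw [if_neg h1]
      rw [if_neg (by rw [← h2]; exact fun hc => asymm hlt hc)]
      exact Prod.ext rfl h2.symm
  · intro u hu
    simp only [Finset.mem_coe] at *
    rw [SimpleGraph.mem_neighborFinset] at hu
    by_cases h : w < u
    · rw [if_pos h]
      simp
    · rw [if_neg h]
      have hne : u ≠ w := hu.ne'
      simp [hne]

lemma prod_edge_pow {ι : Type*} [Fintype ι] [DecidableEq ι] {β : Type*} [CommMonoid β]
    (E : Finset (ι × ι)) (hE : ∀ e ∈ E, e.1 ≠ e.2) (h : ι → β) :
    ∏ e ∈ E, h e.1 * h e.2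
      = ∏ i : ι, h i ^ (E.filter fun e => e.1 = i ∨ e.2 = i).card := by
  classical
  have step1 : ∀ e ∈ E, h e.1 * h e.2
      = ∏ i : ι, (if e.1 = i ∨ e.2 = i then h i else 1) := by
    intro e he
    have hmem : ∀ i : ι, (e.1 = i ∨ e.2 = i) ↔ i ∈ ({e.1, e.2} : Finset ι) := by
      intro i
      simp [eq_comm, or_comm]
    rw [Finset.prod_congr rfl fun i _ => by rw [if_congr (hmem i) rfl rfl]]
    rw [Finset.prod_ite_mem Finset.univ ({e.1, e.2} : Finset ι) h]
    rw [Finset.univ_inter, Finset.prod_pair (hE e he)]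
  rw [Finset.prod_congr rfl step1, Finset.prod_comm]
  refine Finset.prod_congr rfl fun i _ => ?_
  rw [← Finset.prod_filter, Finset.prod_const]

end Combinatorics

section BlockFn

/-- The block-constant function with values `N i j` on `I_i × I_j`, and `0` off the blocks. -/
def Fblk {m : ℕ} (γ : Fin m → ℝ) (N : Fin m → Fin m → ℝ) : ℝ → ℝ → ℝ := fun x y =>
  ∑ i : Fin m, ∑ j : Fin m,
    Set.indicator (blockI γ i) (fun _ => 1) x * Set.indicator (blockI γ j) (fun _ => 1) y
      * N i j

lemma Fblk_eq {m : ℕ} {γ : Fin m → ℝ} (hγ : GoodWidths γ) (N : Fin m → Fin m → ℝ)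
    {i j : Fin m} {x y : ℝ} (hx : x ∈ blockI γ i) (hy : y ∈ blockI γ j) :
    Fblk γ N x y = N i j := by
  classical
  have hx' : ∀ b : Fin m, b ≠ i → x ∉ blockI γ b := fun b hb hxb =>
    Set.disjoint_left.mp (blockI_disjoint hγ b i hb) hxb hx
  have hy' : ∀ b : Fin m, b ≠ j → y ∉ blockI γ b := fun b hb hyb =>
    Set.disjoint_left.mp (blockI_disjoint hγ b j hb) hyb hy
  unfold Fblk
  rw [Finset.sum_eq_single i]
  · rw [Finset.sum_eq_single j]
    · rw [Set.indicator_of_mem hx, Set.indicator_of_mem hy]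
      ring
    · intro b _ hb
      rw [Set.indicator_of_notMem (hy' b hb)]
      ring
    · intro hj
      exact absurd (Finset.mem_univ j) hj
  · intro b _ hb
    refine Finset.sum_eq_zero fun c _ => ?_
    rw [Set.indicator_of_notMem (hx' b hb)]
    ring
  · intro hi
    exact absurd (Finset.mem_univ i) hi

lemma Fblk_mem {m : ℕ} {γ : Fin m → ℝ} (hγ : GoodWidths γ) {N : Fin m → Fin m → ℝ}
    (hN : ∀ i j, N i j ∈ Set.Icc (0 : ℝ) 1) (x y : ℝ) :
    Fblk γ N x y ∈ Set.Icc (0 : ℝ) 1 := by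
  classical
  by_cases hx : ∃ i, x ∈ blockI γ i
  · obtain ⟨i, hxi⟩ := hx
    by_cases hy : ∃ j, y ∈ blockI γ j
    · obtain ⟨j, hyj⟩ := hy
      rw [Fblk_eq hγ N hxi hyj]
      exact hN i j
    · push_neg at hy
      have : Fblk γ N x y = 0 := by
        unfold Fblk
        refine Finset.sum_eq_zero fun a _ => Finset.sum_eq_zero fun b _ => ?_
        rw [Set.indicator_of_notMem (hy b)]
        ring
      rw [this]
      exact ⟨le_rfl, zero_le_one⟩
  · push_neg at hx
    have : Fblk γ N x y = 0 := by
      unfold Fblk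
      refine Finset.sum_eq_zero fun a _ => ?_
      refine Finset.sum_eq_zero fun b _ => ?_
      rw [Set.indicator_of_notMem (hx a)]
      ring
    rw [this]
    exact ⟨le_rfl, zero_le_one⟩

lemma Fblk_measurable {m : ℕ} (γ : Fin m → ℝ) (N : Fin m → Fin m → ℝ) :
    Measurable (Function.uncurry (Fblk γ N)) := by
  have : Function.uncurry (Fblk γ N) = fun q : ℝ × ℝ =>
      ∑ i : Fin m, ∑ j : Fin m,
        Set.indicator (blockI γ i) (fun _ => (1 : ℝ)) q.1
          * Set.indicator (blockI γ j) (fun _ => (1 : ℝ)) q.2 * N i j := rfl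
  rw [this]
  refine Finset.measurable_sum _ fun i _ => Finset.measurable_sum _ fun j _ => ?_
  refine Measurable.mul_const ?_ _
  exact ((measurable_const.indicator (blockI_measurable γ i)).comp measurable_fst).mul
    ((measurable_const.indicator (blockI_measurable γ j)).comp measurable_snd)

end BlockFn

section Conversion

lemma homDensity_lintegral {v : ℕ} (H : SimpleGraph (Fin v)) [DecidableRel H.Adj]
    {f : ℝ → ℝ → ℝ} (hfm : Measurable (Function.uncurry f))
    (h01 : ∀ x y, f x y ∈ Set.Icc (0 : ℝ) 1) :
    homDensity H f = (∫⁻ x in Set.univ.pi fun _ : Fin v => Set.Icc (0 : ℝ) 1,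
      ∏ e ∈ Finset.univ.filter fun e : Fin v × Fin v => e.1 < e.2 ∧ H.Adj e.1 e.2,
        ENNReal.ofReal (f (x e.1) (x e.2)) ∂volume).toReal := by
  unfold homDensity
  rw [MeasureTheory.integral_eq_lintegral_of_nonneg_ae]
  · congr 1
    refine lintegral_congr fun x => ?_
    exact ENNReal.ofReal_prod_of_nonneg fun e _ => (h01 _ _).1
  · exact Filter.Eventually.of_forall fun x => Finset.prod_nonneg fun e _ => (h01 _ _).1
  · refine Measurable.aestronglyMeasurable ?_
    refine Finset.measurable_prod _ fun e _ => ?_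
    have hpair : Measurable fun x : Fin v → ℝ => (x e.1, x e.2) :=
      (measurable_pi_apply e.1).prodMk (measurable_pi_apply e.2)
    exact hfm.comp hpair

end Conversion

section CoreIneq

/-- The core block-Hölder inequality, at the level of lower integrals. -/
lemma core_ineq {v m : ℕ} (d : ℕ) (hd : 1 ≤ d) (E : Finset (Fin v × Fin v))
    (hE : ∀ e ∈ E, e.1 ≠ e.2)
    (hdegE : ∀ w : Fin v, (E.filter fun e => e.1 = w ∨ e.2 = w).card = d)
    {γ : Fin m → ℝ} (hγ : GoodWidths γ) (hm : 0 < m)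
    {f : ℝ → ℝ → ℝ} (hfm : Measurable (Function.uncurry f))
    (hf01 : ∀ x y, f x y ∈ Set.Icc (0 : ℝ) 1) (N : Fin m → Fin m → ℝ)
    (hαa : ∀ i j : Fin m, ENNReal.ofReal (N i j)
      = (∫⁻ u in Set.Icc (0 : ℝ) 1, ∫⁻ w in Set.Icc (0 : ℝ) 1,
          ENNReal.ofReal (fBlock γ f i j u w) ^ d ∂volume ∂volume) ^ ((d : ℝ)⁻¹)) :
    ∫⁻ x in Set.univ.pi fun _ : Fin v => Set.Icc (0 : ℝ) 1,
        ∏ e ∈ E, ENNReal.ofReal (f (x e.1) (x e.2)) ∂volume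
      ≤ ∫⁻ x in Set.univ.pi fun _ : Fin v => Set.Icc (0 : ℝ) 1,
        ∏ e ∈ E, ENNReal.ofReal (Fblk γ N (x e.1) (x e.2)) ∂volume := by
  classical
  have hγpos := hγ.1
  have hγle1 : ∀ i, γ i ≤ 1 := by
    intro i
    rw [← hγ.2]
    exact Finset.single_le_sum (fun j _ => (hγpos j).le) (Finset.mem_univ i)
  have hβ : ∀ i j : Fin m,
      (∫⁻ a, ∫⁻ b, ENNReal.ofReal (f a b) ^ d
          ∂(volume.restrict (blockI γ j)) ∂(volume.restrict (blockI γ i)))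
        = ENNReal.ofReal (γ i) * ENNReal.ofReal (γ j)
          * ∫⁻ u in Set.Icc (0 : ℝ) 1, ∫⁻ w in Set.Icc (0 : ℝ) 1,
              ENNReal.ofReal (fBlock γ f i j u w) ^ d ∂volume ∂volume := by
    intro i j
    have hinner : ∀ a : ℝ,
        (∫⁻ b, ENNReal.ofReal (f a b) ^ d ∂(volume.restrict (blockI γ j)))
          = ENNReal.ofReal (γ j) * ∫⁻ w in Set.Icc (0 : ℝ) 1,
              ENNReal.ofReal (f a (cumSum γ (j : ℕ) + w * γ j)) ^ d ∂volume := by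
      intro a
      rw [restrict_blockI γ j]
      exact lintegral_Icc_affine (hγpos j)
        (((hfm.comp (measurable_const.prodMk measurable_id)).ennreal_ofReal).pow_const d)
    have hGmeas : Measurable fun a : ℝ => ∫⁻ w in Set.Icc (0 : ℝ) 1,
        ENNReal.ofReal (f a (cumSum γ (j : ℕ) + w * γ j)) ^ d ∂volume := by
      refine Measurable.lintegral_prod_right ?_
      exact ((hfm.comp (measurable_fst.prodMk
        ((measurable_snd.mul_const (γ j)).const_add _))).ennreal_ofReal).pow_const d
    calc (∫⁻ a, ∫⁻ b, ENNReal.ofReal (f a b) ^ d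
            ∂(volume.restrict (blockI γ j)) ∂(volume.restrict (blockI γ i)))
        = ∫⁻ a, ENNReal.ofReal (γ j) * (fun a : ℝ => ∫⁻ w in Set.Icc (0 : ℝ) 1,
            ENNReal.ofReal (f a (cumSum γ (j : ℕ) + w * γ j)) ^ d ∂volume) a
            ∂(volume.restrict (blockI γ i)) := lintegral_congr hinner
      _ = ENNReal.ofReal (γ j) * ∫⁻ a, (fun a : ℝ => ∫⁻ w in Set.Icc (0 : ℝ) 1,
            ENNReal.ofReal (f a (cumSum γ (j : ℕ) + w * γ j)) ^ d ∂volume) a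
            ∂(volume.restrict (blockI γ i)) :=
          lintegral_const_mul' _ _ ENNReal.ofReal_ne_top
      _ = ENNReal.ofReal (γ j) * (ENNReal.ofReal (γ i)
            * ∫⁻ u in Set.Icc (0 : ℝ) 1, (fun a : ℝ => ∫⁻ w in Set.Icc (0 : ℝ) 1,
                ENNReal.ofReal (f a (cumSum γ (j : ℕ) + w * γ j)) ^ d ∂volume)
                  (cumSum γ (i : ℕ) + u * γ i) ∂volume) := by
          rw [restrict_blockI γ i, lintegral_Icc_affine (hγpos i) hGmeas]
      _ = ENNReal.ofReal (γ j) * (ENNReal.ofReal (γ i)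
            * ∫⁻ u in Set.Icc (0 : ℝ) 1, ∫⁻ w in Set.Icc (0 : ℝ) 1,
                ENNReal.ofReal (fBlock γ f i j u w) ^ d ∂volume ∂volume) := rfl
      _ = ENNReal.ofReal (γ i) * ENNReal.ofReal (γ j)
            * ∫⁻ u in Set.Icc (0 : ℝ) 1, ∫⁻ w in Set.Icc (0 : ℝ) 1,
                ENNReal.ofReal (fBlock γ f i j u w) ^ d ∂volume ∂volume := by ring
  have hBkmeas : ∀ k : Fin v → Fin m,
      MeasurableSet (Set.univ.pi fun i => blockI γ (k i)) :=
    fun k => MeasurableSet.univ_pi fun i => blockI_measurable γ (k i)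
  have hUnion : (Set.univ.pi fun _ : Fin v => Set.Icc (0 : ℝ) 1)
      = ⋃ k : Fin v → Fin m, Set.univ.pi fun i => blockI γ (k i) := by
    ext x
    constructor
    · intro hx
      choose k hk using fun i : Fin v => blockI_cover hγ hm (hx i (Set.mem_univ i))
      exact Set.mem_iUnion.mpr ⟨k, fun i _ => hk i⟩
    · intro hx
      obtain ⟨k, hk⟩ := Set.mem_iUnion.mp hx
      exact fun i _ => blockI_subset hγ (k i) (hk i (Set.mem_univ i))
  have hdisjBk : Pairwise (Function.onFun Disjoint
      fun k : Fin v → Fin m => Set.univ.pi fun i => blockI γ (k i)) := by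
    intro k k' hkk
    obtain ⟨i, hi⟩ := Function.ne_iff.mp hkk
    refine Set.disjoint_left.mpr fun x hx hx' => ?_
    exact Set.disjoint_left.mp (blockI_disjoint hγ (k i) (k' i) hi)
      (hx i (Set.mem_univ i)) (hx' i (Set.mem_univ i))
  rw [hUnion, lintegral_iUnion hBkmeas hdisjBk, lintegral_iUnion hBkmeas hdisjBk]
  refine ENNReal.tsum_le_tsum fun k => ?_
  have hmeq : (volume : Measure (Fin v → ℝ)).restrict (Set.univ.pi fun i => blockI γ (k i))
      = Measure.pi fun i => volume.restrict (blockI γ (k i)) :=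
    pi_restrict fun i => blockI_measurable γ (k i)
  have hRk : ∫⁻ x in Set.univ.pi fun i => blockI γ (k i),
      ∏ e ∈ E, ENNReal.ofReal (Fblk γ N (x e.1) (x e.2)) ∂volume
        = (∏ i, ENNReal.ofReal (γ (k i)))
          * ∏ e ∈ E, ENNReal.ofReal (N (k e.1) (k e.2)) := by
    rw [setLIntegral_congr_fun (hBkmeas k)
      (g := fun _ => ∏ e ∈ E, ENNReal.ofReal (N (k e.1) (k e.2)))
      (fun x hx => Finset.prod_congr rfl fun e _ => by
        rw [Fblk_eq hγ N (hx e.1 (Set.mem_univ _)) (hx e.2 (Set.mem_univ _))])]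
    rw [setLIntegral_const, volume_pi_pi]
    rw [Finset.prod_congr rfl fun i (_ : i ∈ Finset.univ) => volume_blockI hγ (k i)]
    exact mul_comm _ _
  rw [hRk]
  rw [show (∫⁻ x in Set.univ.pi fun i => blockI γ (k i),
      ∏ e ∈ E, ENNReal.ofReal (f (x e.1) (x e.2)) ∂volume)
    = ∫⁻ x, ∏ e ∈ E, ENNReal.ofReal (f (x e.1) (x e.2))
        ∂(Measure.pi fun i => volume.restrict (blockI γ (k i))) from by rw [← hmeq]]
  have happ := finner (μ := fun i : Fin v => volume.restrict (blockI γ (k i)))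
    (fun i => by
      rw [Measure.restrict_apply_univ, volume_blockI hγ (k i)]
      exact ENNReal.ofReal_le_one.mpr (hγle1 (k i)))
    d hd E hE (fun _ a b => ENNReal.ofReal (f a b))
    (fun e => hfm.ennreal_ofReal)
    (fun e a b => ENNReal.ofReal_le_one.mpr (hf01 a b).2)
    hdegE
  refine le_trans happ ?_
  calc ∏ e ∈ E, (∫⁻ a, ∫⁻ b, ENNReal.ofReal (f a b) ^ d
          ∂(volume.restrict (blockI γ (k e.2))) ∂(volume.restrict (blockI γ (k e.1))))
            ^ ((d : ℝ)⁻¹)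
      = ∏ e ∈ E, (ENNReal.ofReal (γ (k e.1)) ^ ((d : ℝ)⁻¹)
          * ENNReal.ofReal (γ (k e.2)) ^ ((d : ℝ)⁻¹))
          * ENNReal.ofReal (N (k e.1) (k e.2)) := by
        refine Finset.prod_congr rfl fun e _ => ?_
        rw [hβ (k e.1) (k e.2), ENNReal.mul_rpow_of_nonneg _ _ (by positivity),
          ENNReal.mul_rpow_of_nonneg _ _ (by positivity), ← hαa (k e.1) (k e.2)]
    _ = (∏ e ∈ E, ENNReal.ofReal (γ (k e.1)) ^ ((d : ℝ)⁻¹)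
          * ENNReal.ofReal (γ (k e.2)) ^ ((d : ℝ)⁻¹))
          * ∏ e ∈ E, ENNReal.ofReal (N (k e.1) (k e.2)) := Finset.prod_mul_distrib
    _ = (∏ i, (ENNReal.ofReal (γ (k i)) ^ ((d : ℝ)⁻¹))
            ^ (E.filter fun e => e.1 = i ∨ e.2 = i).card)
          * ∏ e ∈ E, ENNReal.ofReal (N (k e.1) (k e.2)) := by
        rw [prod_edge_pow E hE fun i => ENNReal.ofReal (γ (k i)) ^ ((d : ℝ)⁻¹)]
    _ = (∏ i, ENNReal.ofReal (γ (k i)))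
          * ∏ e ∈ E, ENNReal.ofReal (N (k e.1) (k e.2)) := by
        congr 1
        refine Finset.prod_congr rfl fun i _ => ?_
        rw [hdegE i]
        exact ennreal_rpow_inv_pow hd _
    _ ≤ (∏ i, ENNReal.ofReal (γ (k i)))
          * ∏ e ∈ E, ENNReal.ofReal (N (k e.1) (k e.2)) := le_rfl

end CoreIneq


/-- generalized Hölder / block-averaging inequality
`t(H,f) ≤ t(H,f*)` for `d`-regular `H`. -/
theorem stmt8 {v m : ℕ} (d : ℕ) (hd : 1 ≤ d)
    (H : SimpleGraph (Fin v)) [DecidableRel H.Adj] (hreg : ∀ u, H.degree u = d)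
    (γ : Fin m → ℝ) (hγ : GoodWidths γ)
    (f : ℝ → ℝ → ℝ) (hf : IsGraphon f)
    (fstar : ℝ → ℝ → ℝ)
    (hstar : ∀ i j : Fin m, ∀ x ∈ blockI γ i, ∀ y ∈ blockI γ j,
      fstar x y = normD d (fBlock γ f i j)) :
    homDensity H f ≤ homDensity H fstar := by
  classical
  obtain ⟨hfm, hf01, -⟩ := hf
  have hm : 0 < m := by
    rcases Nat.eq_zero_or_pos m with h | h
    · exfalso
      have hsum := hγ.2
      subst h
      simp at hsum
    · exact h
  have hE : ∀ e ∈ Finset.univ.filter fun e : Fin v × Fin v => e.1 < e.2 ∧ H.Adj e.1 e.2,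
      e.1 ≠ e.2 := by
    intro e he
    rw [Finset.mem_filter] at he
    exact ne_of_lt he.2.1
  have hdegE : ∀ w : Fin v,
      ((Finset.univ.filter fun e : Fin v × Fin v => e.1 < e.2 ∧ H.Adj e.1 e.2).filter
        fun e => e.1 = w ∨ e.2 = w).card = d := by
    intro w
    rw [degree_filter H w, hreg w]
  have hfBm : ∀ i j : Fin m, Measurable (Function.uncurry (fBlock γ f i j)) := by
    intro i j
    have heq : Function.uncurry (fBlock γ f i j) = fun q : ℝ × ℝ =>
        Function.uncurry f (cumSum γ (i : ℕ) + q.1 * γ i, cumSum γ (j : ℕ) + q.2 * γ j) := rfl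
    rw [heq]
    exact hfm.comp (((measurable_fst.mul_const (γ i)).const_add _).prodMk
      ((measurable_snd.mul_const (γ j)).const_add _))
  have hfB01 : ∀ (i j : Fin m) (x y : ℝ), fBlock γ f i j x y ∈ Set.Icc (0 : ℝ) 1 :=
    fun i j x y => hf01 _ _
  have hexp : ∀ i j : Fin m,
      (∫⁻ q in unitSq, ENNReal.ofReal (fBlock γ f i j q.1 q.2 ^ d) ∂volume)
        = ∫⁻ u in Set.Icc (0 : ℝ) 1, ∫⁻ w in Set.Icc (0 : ℝ) 1,
            ENNReal.ofReal (fBlock γ f i j u w) ^ d ∂volume ∂volume := by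
    intro i j
    have hsplit : ((volume : Measure (ℝ × ℝ)).restrict (Set.Icc (0 : ℝ) 1 ×ˢ Set.Icc (0 : ℝ) 1))
        = ((volume.restrict (Set.Icc (0 : ℝ) 1)).prod (volume.restrict (Set.Icc (0 : ℝ) 1))) := by
      rw [Measure.volume_eq_prod, Measure.prod_restrict]
    have hmeas : Measurable fun q : ℝ × ℝ => ENNReal.ofReal (fBlock γ f i j q.1 q.2 ^ d) :=
      ((hfBm i j).pow_const d).ennreal_ofReal
    rw [show unitSq = Set.Icc (0 : ℝ) 1 ×ˢ Set.Icc (0 : ℝ) 1 from rfl, hsplit,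
      lintegral_prod _ hmeas.aemeasurable]
    exact lintegral_congr fun u => lintegral_congr fun w =>
      ENNReal.ofReal_pow (hfB01 i j u w).1 d
  have hLBle : ∀ i j : Fin m,
      (∫⁻ u in Set.Icc (0 : ℝ) 1, ∫⁻ w in Set.Icc (0 : ℝ) 1,
        ENNReal.ofReal (fBlock γ f i j u w) ^ d ∂volume ∂volume) ≤ 1 := by
    intro i j
    have h1 : (volume (Set.Icc (0 : ℝ) 1)) = 1 := by
      rw [Real.volume_Icc]; norm_num
    calc (∫⁻ u in Set.Icc (0 : ℝ) 1, ∫⁻ w in Set.Icc (0 : ℝ) 1,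
          ENNReal.ofReal (fBlock γ f i j u w) ^ d ∂volume ∂volume)
        ≤ ∫⁻ _u in Set.Icc (0 : ℝ) 1, 1 ∂volume := by
          refine lintegral_mono fun u => ?_
          calc ∫⁻ w in Set.Icc (0 : ℝ) 1, ENNReal.ofReal (fBlock γ f i j u w) ^ d ∂volume
              ≤ ∫⁻ _w in Set.Icc (0 : ℝ) 1, 1 ∂volume := lintegral_mono fun w =>
                pow_le_one' (ENNReal.ofReal_le_one.mpr (hfB01 i j u w).2) d
            _ = 1 := by rw [setLIntegral_one, h1]
      _ = 1 := by rw [setLIntegral_one, h1]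
  have hLBne : ∀ i j : Fin m,
      (∫⁻ u in Set.Icc (0 : ℝ) 1, ∫⁻ w in Set.Icc (0 : ℝ) 1,
        ENNReal.ofReal (fBlock γ f i j u w) ^ d ∂volume ∂volume) ≠ ⊤ :=
    fun i j => ne_top_of_le_ne_top ENNReal.one_ne_top (hLBle i j)
  have hIntMem : ∀ i j : Fin m,
      (∫ q in unitSq, fBlock γ f i j q.1 q.2 ^ d)
        = (∫⁻ u in Set.Icc (0 : ℝ) 1, ∫⁻ w in Set.Icc (0 : ℝ) 1,
            ENNReal.ofReal (fBlock γ f i j u w) ^ d ∂volume ∂volume).toReal := by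
    intro i j
    have hmeas : Measurable fun q : ℝ × ℝ => fBlock γ f i j q.1 q.2 ^ d :=
      (hfBm i j).pow_const d
    have h1 : 0 ≤ᵐ[volume.restrict unitSq] fun q : ℝ × ℝ => fBlock γ f i j q.1 q.2 ^ d :=
      Filter.Eventually.of_forall fun q => pow_nonneg (hfB01 i j q.1 q.2).1 d
    have h3 := MeasureTheory.integral_eq_lintegral_of_nonneg_ae h1
      hmeas.aestronglyMeasurable
    rw [h3]
    congr 1
    exact hexp i j
  have hαa : ∀ i j : Fin m, ENNReal.ofReal (normD d (fBlock γ f i j))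
      = (∫⁻ u in Set.Icc (0 : ℝ) 1, ∫⁻ w in Set.Icc (0 : ℝ) 1,
          ENNReal.ofReal (fBlock γ f i j u w) ^ d ∂volume ∂volume) ^ ((d : ℝ)⁻¹) := by
    intro i j
    unfold normD
    rw [hIntMem i j,
      ← ENNReal.ofReal_rpow_of_nonneg ENNReal.toReal_nonneg
        (by positivity : (0 : ℝ) ≤ (d : ℝ)⁻¹),
      ENNReal.ofReal_toReal (hLBne i j)]
  have hN01 : ∀ i j : Fin m, normD d (fBlock γ f i j) ∈ Set.Icc (0 : ℝ) 1 := by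
    intro i j
    have hR := hIntMem i j
    have htr : (∫ q in unitSq, fBlock γ f i j q.1 q.2 ^ d) ≤ 1 := by
      rw [hR]
      have := ENNReal.toReal_mono ENNReal.one_ne_top (hLBle i j)
      simpa using this
    have htr0 : (0 : ℝ) ≤ ∫ q in unitSq, fBlock γ f i j q.1 q.2 ^ d := by
      rw [hR]
      exact ENNReal.toReal_nonneg
    constructor
    · exact Real.rpow_nonneg htr0 _
    · exact Real.rpow_le_one htr0 htr (by positivity)
  have hFme := Fblk_measurable γ fun i j => normD d (fBlock γ f i j)
  have hFmem : ∀ x y : ℝ,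
      Fblk γ (fun i j => normD d (fBlock γ f i j)) x y ∈ Set.Icc (0 : ℝ) 1 :=
    fun x y => Fblk_mem hγ hN01 x y
  have hc1 := homDensity_lintegral H hfm hf01
  have hc2 := homDensity_lintegral H hFme hFmem
  have hFstar : homDensity H fstar
      = homDensity H (Fblk γ fun i j => normD d (fBlock γ f i j)) := by
    unfold homDensity
    refine setIntegral_congr_fun (MeasurableSet.univ_pi fun _ => measurableSet_Icc) ?_
    intro x hx
    refine Finset.prod_congr rfl fun e _ => ?_
    obtain ⟨i, hi⟩ := blockI_cover hγ hm (hx e.1 (Set.mem_univ _))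
    obtain ⟨j, hj⟩ := blockI_cover hγ hm (hx e.2 (Set.mem_univ _))
    rw [hstar i j _ hi _ hj, Fblk_eq hγ _ hi hj]
  rw [hc1, hFstar, hc2]
  have hRle : (∫⁻ x in Set.univ.pi fun _ : Fin v => Set.Icc (0 : ℝ) 1,
      ∏ e ∈ Finset.univ.filter fun e : Fin v × Fin v => e.1 < e.2 ∧ H.Adj e.1 e.2,
        ENNReal.ofReal
          (Fblk γ (fun i j => normD d (fBlock γ f i j)) (x e.1) (x e.2)) ∂volume) ≤ 1 := by
    have hvol : volume (Set.univ.pi fun _ : Fin v => Set.Icc (0 : ℝ) 1) = 1 := by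
      rw [volume_pi_pi]
      simp [Real.volume_Icc]
    calc (∫⁻ x in Set.univ.pi fun _ : Fin v => Set.Icc (0 : ℝ) 1,
        ∏ e ∈ Finset.univ.filter fun e : Fin v × Fin v => e.1 < e.2 ∧ H.Adj e.1 e.2,
          ENNReal.ofReal
            (Fblk γ (fun i j => normD d (fBlock γ f i j)) (x e.1) (x e.2)) ∂volume)
        ≤ ∫⁻ _x in Set.univ.pi fun _ : Fin v => Set.Icc (0 : ℝ) 1, 1 ∂volume :=
          lintegral_mono fun x => Finset.prod_le_one (fun e _ => zero_le) fun e _ =>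
            ENNReal.ofReal_le_one.mpr (hFmem _ _).2
      _ = 1 := by rw [setLIntegral_one, hvol]
  refine ENNReal.toReal_mono (ne_top_of_le_ne_top ENNReal.one_ne_top hRle) ?_
  exact core_ineq d hd _ hE hdegE hγ hm hfm hf01 _ hαa

end GraphonLDP
end
end

section
/- Let W_0 ∈ B^γ be a block graphon and let ε > 0. There exists η > 0, depending only on ε and W_0, such that for all f, g ∈ W_Ω with f ≥ g ≥ W_0 pointwise and d_□(f,g) ≥ ε, one has I_{W_0}(g) ≤ I_{W_0}(f) − η. -/
open MeasureTheory Set Filter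
open scoped ENNReal NNReal

noncomputable section

namespace GraphonLDP

/-- auxiliary: log t - log(1-t) - 4t -/
def psiAux (t : ℝ) : ℝ := Real.log t - Real.log (1 - t) - 4 * t

lemma psiAux_hasDerivAt {t : ℝ} (ht : 0 < t) (ht1 : t < 1) :
    HasDerivAt psiAux (t⁻¹ - (1 - t)⁻¹ * (-1) - 4) t := by
  have h1 : HasDerivAt Real.log t⁻¹ t := Real.hasDerivAt_log ht.ne'
  have h2 : HasDerivAt (fun t : ℝ => 1 - t) (-1) t := by
    simpa using (hasDerivAt_id t).const_sub 1
  have h3 : HasDerivAt (fun t : ℝ => Real.log (1 - t)) ((1 - t)⁻¹ * (-1)) t :=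
    (Real.hasDerivAt_log (by linarith)).comp t h2
  have h4 : HasDerivAt (fun t : ℝ => 4 * t) 4 t := by
    simpa using (hasDerivAt_id t).const_mul 4
  exact (h1.sub h3).sub h4

lemma psiAux_mono : MonotoneOn psiAux (Set.Ioo (0:ℝ) 1) := by
  have hd : ∀ t ∈ Set.Ioo (0:ℝ) 1, HasDerivAt psiAux (t⁻¹ + (1 - t)⁻¹ - 4) t := by
    intro t ht
    have := psiAux_hasDerivAt ht.1 ht.2
    convert this using 1; ring
  apply monotoneOn_of_deriv_nonneg (convex_Ioo 0 1)
  · intro t ht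
    exact (hd t ht).continuousAt.continuousWithinAt
  · intro t ht
    rw [interior_Ioo] at ht
    exact (hd t ht).differentiableAt.differentiableWithinAt
  · intro t ht
    rw [interior_Ioo] at ht
    rw [(hd t ht).deriv]
    have h0 : 0 < t := ht.1
    have h1 : 0 < 1 - t := by linarith [ht.2]
    have key : t⁻¹ + (1 - t)⁻¹ = (t * (1 - t))⁻¹ := by field_simp; ring
    rw [key, sub_nonneg, ← one_div, le_div_iff₀ (by positivity)]
    nlinarith [sq_nonneg (2 * t - 1)]

def phiAux (p u : ℝ) : ℝ :=
  u * Real.log u - u * Real.log p +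
    ((1 - u) * Real.log (1 - u) - (1 - u) * Real.log (1 - p)) - 2 * (u - p) ^ 2

lemma hRel_eq_phi {p u : ℝ} (hp : 0 < p) (hp1 : p < 1) (hu : 0 < u) (hu1 : u ≤ 1) :
    hRel p u = phiAux p u + 2 * (u - p) ^ 2 := by
  unfold hRel phiAux
  rcases eq_or_lt_of_le hu1 with h1 | h1
  · subst h1
    simp [Real.log_div one_ne_zero hp.ne']
    try ring
  · rw [Real.log_div hu.ne' hp.ne',
      Real.log_div (by linarith : (1:ℝ) - u ≠ 0) (ne_of_gt (by linarith))]
    ring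

lemma phiAux_hasDerivAt {p u : ℝ} (hu : 0 < u) (hu1 : u < 1) :
    HasDerivAt (phiAux p) (psiAux u - psiAux p) u := by
  have h1 : HasDerivAt (fun u : ℝ => u * Real.log u) (Real.log u + 1) u :=
    Real.hasDerivAt_mul_log hu.ne'
  have h2 : HasDerivAt (fun u : ℝ => u * Real.log p) (Real.log p) u := by
    simpa using (hasDerivAt_id u).mul_const (Real.log p)
  have h3 : HasDerivAt (fun u : ℝ => 1 - u) (-1) u := by
    simpa using (hasDerivAt_id u).const_sub 1
  have h4 : HasDerivAt (fun u : ℝ => (1 - u) * Real.log (1 - u))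
      ((Real.log (1 - u) + 1) * (-1)) u :=
    (Real.hasDerivAt_mul_log (by linarith : (1:ℝ) - u ≠ 0)).comp u h3
  have h5 : HasDerivAt (fun u : ℝ => (1 - u) * Real.log (1 - p)) (-Real.log (1 - p)) u := by
    simpa using h3.mul_const (Real.log (1 - p))
  have h6 : HasDerivAt (fun u : ℝ => 2 * (u - p) ^ 2) (2 * (2 * (u - p))) u := by
    have : HasDerivAt (fun u : ℝ => (u - p) ^ 2) (2 * (u - p) ^ 1 * 1) u :=
      ((hasDerivAt_id u).sub_const p).pow 2
    simpa using this.const_mul 2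
  have := ((h1.sub h2).add (h4.sub h5)).sub h6
  refine this.congr_deriv ?_
  unfold psiAux
  ring

lemma phiAux_mono {p : ℝ} (hp : 0 < p) (hp1 : p < 1) :
    MonotoneOn (phiAux p) (Set.Icc p 1) := by
  apply monotoneOn_of_deriv_nonneg (convex_Icc p 1)
  · apply Continuous.continuousOn
    have c1 : Continuous fun u : ℝ => u * Real.log u := Real.continuous_mul_log
    have c2 : Continuous fun u : ℝ => (1 - u) * Real.log (1 - u) :=
      Real.continuous_mul_log.comp (continuous_const.sub continuous_id)
    unfold phiAux
    fun_prop
  · intro u hu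
    rw [interior_Icc] at hu
    exact (phiAux_hasDerivAt (by linarith [hu.1] : (0:ℝ) < u) hu.2).differentiableAt.differentiableWithinAt
  · intro u hu
    rw [interior_Icc] at hu
    rw [(phiAux_hasDerivAt (by linarith [hu.1] : (0:ℝ) < u) hu.2).deriv, sub_nonneg]
    exact psiAux_mono ⟨hp, hp1⟩ ⟨by linarith [hu.1], hu.2⟩ (le_of_lt hu.1)

lemma phiAux_self {p : ℝ} : phiAux p p = 0 := by unfold phiAux; ring

lemma hRel_gap {p g f : ℝ} (hp : 0 < p) (hp1 : p < 1) (hg : p ≤ g) (hgf : g ≤ f)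
    (hf1 : f ≤ 1) : 0 ≤ hRel p g ∧ hRel p g + 2 * (f - g) ^ 2 ≤ hRel p f := by
  have hmono := phiAux_mono hp hp1
  have hgI : g ∈ Set.Icc p 1 := ⟨hg, le_trans hgf hf1⟩
  have hfI : f ∈ Set.Icc p 1 := ⟨le_trans hg hgf, hf1⟩
  have h1 : phiAux p p ≤ phiAux p g := hmono ⟨le_refl p, hp1.le⟩ hgI hg
  have h2 : phiAux p g ≤ phiAux p f := hmono hgI hfI hgf
  rw [phiAux_self] at h1
  have eg : hRel p g = phiAux p g + 2 * (g - p) ^ 2 :=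
    hRel_eq_phi hp hp1 (lt_of_lt_of_le hp hg) hgI.2
  have ef : hRel p f = phiAux p f + 2 * (f - p) ^ 2 :=
    hRel_eq_phi hp hp1 (lt_of_lt_of_le hp hfI.1) hf1
  constructor
  · rw [eg]; positivity
  · rw [eg, ef]
    nlinarith [mul_nonneg (sub_nonneg.2 hg) (sub_nonneg.2 hgf)]

lemma key_pointwise {p g f : ℝ} (hp : 0 < p) (hp1 : p < 1) (hg : p ≤ g) (hgf : g ≤ f)
    (hf1 : f ≤ 1) :
    relEnt p g + ENNReal.ofReal (2 * (f - g) ^ 2) ≤ relEnt p f := by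
  obtain ⟨h0, hle⟩ := hRel_gap hp hp1 hg hgf hf1
  simp only [relEnt, if_neg hp.ne', if_neg hp1.ne]
  show ENNReal.ofReal (hRel p g) + ENNReal.ofReal (2 * (f - g) ^ 2) ≤ ENNReal.ofReal (hRel p f)
  rw [← ENNReal.ofReal_add h0 (by positivity)]
  exact ENNReal.ofReal_le_ofReal hle


/-- monotone entropy gap: if `f ≥ g ≥ W₀` pointwise and
`d_□(f,g) ≥ ε` then `I_{W₀}(g) ≤ I_{W₀}(f) − η`. -/
theorem stmt10 {m : ℕ} (γ : Fin m → ℝ) (hγ : GoodWidths γ)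
    (W₀ : ℝ → ℝ → ℝ) (P : Fin m → Fin m → ℝ)
    (hW : IsGraphon W₀) (hWb : IsBlockGraphon γ P W₀)
    (ε : ℝ) (hε : 0 < ε) :
    ∃ η > 0, ∀ f g : ℝ → ℝ → ℝ, MemWOmega W₀ f → MemWOmega W₀ g →
      (∀ x ∈ Set.Icc (0:ℝ) 1, ∀ y ∈ Set.Icc (0:ℝ) 1,
        W₀ x y ≤ g x y ∧ g x y ≤ f x y) →
      ε ≤ cutDist f g →
      Ient W₀ g + ENNReal.ofReal η ≤ Ient W₀ f := by
  set ε' : ℝ := min ε 1 with hε'def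
  have hε' : 0 < ε' := lt_min hε one_pos
  have hε'1 : ε' ≤ 1 := min_le_right _ _
  refine ⟨ε' ^ 3 / 8, by positivity, ?_⟩
  intro f g hfMem hgMem horder hcd
  obtain ⟨hfG, hfW0⟩ := hfMem
  obtain ⟨hgG, hgW0⟩ := hgMem
  set μ : Measure (ℝ × ℝ) := volume.restrict unitSq with hμdef
  have hUm : MeasurableSet unitSq := measurableSet_Icc.prod measurableSet_Icc
  have hOm : MeasurableSet (OmegaSet W₀) := by
    have : OmegaSet W₀ = unitSq ∩ (Function.uncurry W₀) ⁻¹' (Set.Ioo (0:ℝ) 1) := rfl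
    rw [this]
    exact hUm.inter (hW.1 measurableSet_Ioo)
  have hμuniv : μ Set.univ = 1 := by
    rw [hμdef, Measure.restrict_apply_univ]
    rw [unitSq, Measure.volume_eq_prod, Measure.prod_prod, Real.volume_Icc]
    norm_num
  haveI : IsFiniteMeasure μ := ⟨by rw [hμuniv]; exact ENNReal.one_lt_top⟩
  -- D and its properties
  set D : ℝ × ℝ → ℝ := fun q => f q.1 q.2 - g q.1 q.2 with hDdef
  have hDmeas : Measurable D := hfG.1.sub hgG.1
  have hD01 : ∀ q, D q ≤ 1 := by
    intro q
    have h1 := hfG.2.1 q.1 q.2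
    have h2 := hgG.2.1 q.1 q.2
    simp only [hDdef]
    rw [Set.mem_Icc] at h1 h2
    linarith [h1.2, h2.1]
  have hDnn : ∀ q ∈ unitSq, 0 ≤ D q := fun q hq =>
    sub_nonneg.2 (horder q.1 hq.1 q.2 hq.2).2
  have hDint : IntegrableOn D unitSq := by
    refine Integrable.mono' (integrable_const (1:ℝ)) (hDmeas.aestronglyMeasurable) ?_
    refine Filter.Eventually.of_forall fun q => ?_
    have h1 := hfG.2.1 q.1 q.2
    have h2 := hgG.2.1 q.1 q.2
    rw [Set.mem_Icc] at h1 h2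
    rw [Real.norm_eq_abs, abs_le]
    constructor <;> simp only [hDdef] <;> [linarith [h1.1, h2.2]; linarith [h1.2, h2.1]]
  -- Step A : ε' ≤ ∫ D
  have hintD : ε' ≤ ∫ q in unitSq, D q := by
    refine le_trans (le_trans (min_le_left _ _) hcd) ?_
    have hne : Nonempty ({S : Set ℝ // MeasurableSet S ∧ S ⊆ Set.Icc (0:ℝ) 1} ×
        {T : Set ℝ // MeasurableSet T ∧ T ⊆ Set.Icc (0:ℝ) 1}) :=
      ⟨⟨⟨∅, MeasurableSet.empty, Set.empty_subset _⟩, ⟨∅, MeasurableSet.empty, Set.empty_subset _⟩⟩⟩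
    refine ciSup_le fun p => ?_
    obtain ⟨⟨S, hSm, hSsub⟩, ⟨T, hTm, hTsub⟩⟩ := p
    have hsub : S ×ˢ T ⊆ unitSq := Set.prod_mono hSsub hTsub
    rw [abs_of_nonneg (setIntegral_nonneg (hSm.prod hTm) fun q hq => hDnn q (hsub hq))]
    exact setIntegral_mono_set hDint
      ((ae_restrict_mem hUm).mono fun q hq => hDnn q hq)
      (HasSubset.Subset.eventuallyLE hsub)
  -- lintegral version
  have hlintD : ENNReal.ofReal ε' ≤ ∫⁻ q, ENNReal.ofReal (D q) ∂μ := by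
    rw [← ofReal_integral_eq_lintegral_ofReal hDint
      ((ae_restrict_mem hUm).mono fun q hq => hDnn q hq)]
    exact ENNReal.ofReal_le_ofReal hintD
  -- Markov
  set A : Set (ℝ × ℝ) := unitSq ∩ {q | ε' / 2 ≤ D q} with hAdef
  have hAm : MeasurableSet A := hUm.inter (hDmeas measurableSet_Ici)
  have hμA : ENNReal.ofReal (ε' / 2) ≤ μ A := by
    have hsplit := lintegral_add_compl (fun q => ENNReal.ofReal (D q)) hAm (μ := μ)
    have hA1 : ∫⁻ q in A, ENNReal.ofReal (D q) ∂μ ≤ μ A := by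
      calc ∫⁻ q in A, ENNReal.ofReal (D q) ∂μ
          ≤ ∫⁻ _ in A, 1 ∂μ := lintegral_mono fun q => by
            simpa using ENNReal.ofReal_le_ofReal (hD01 q)
        _ = μ.restrict A Set.univ := by rw [lintegral_const, one_mul]
        _ ≤ μ A := by rw [Measure.restrict_apply_univ]
    have hA2 : ∫⁻ q in Aᶜ, ENNReal.ofReal (D q) ∂μ ≤ ENNReal.ofReal (ε' / 2) := by
      calc ∫⁻ q in Aᶜ, ENNReal.ofReal (D q) ∂μ
          ≤ ∫⁻ _ in Aᶜ, ENNReal.ofReal (ε' / 2) ∂μ := by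
            refine lintegral_mono_ae ?_
            have h1 : ∀ᵐ q ∂(μ.restrict Aᶜ), q ∈ Aᶜ :=
              ae_restrict_mem hAm.compl
            have h2 : ∀ᵐ q ∂(μ.restrict Aᶜ), q ∈ unitSq := by
              rw [hμdef, Measure.restrict_restrict hAm.compl]
              exact (ae_restrict_mem (hAm.compl.inter hUm)).mono fun q hq => hq.2
            filter_upwards [h1, h2] with q hq hqU
            refine ENNReal.ofReal_le_ofReal ?_
            by_contra hcon
            exact hq ⟨hqU, le_of_not_gt fun h => hcon (le_of_lt h)⟩ |>.elim
          _ = ENNReal.ofReal (ε' / 2) * μ.restrict Aᶜ Set.univ := by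
            rw [lintegral_const]
          _ ≤ ENNReal.ofReal (ε' / 2) * 1 := by
            refine mul_le_mul_right ?_ _
            rw [Measure.restrict_apply_univ]
            calc μ Aᶜ ≤ μ Set.univ := measure_mono (Set.subset_univ _)
              _ = 1 := hμuniv
          _ = ENNReal.ofReal (ε' / 2) := mul_one _
    have : ENNReal.ofReal ε' ≤ μ A + ENNReal.ofReal (ε' / 2) := by
      calc ENNReal.ofReal ε' ≤ ∫⁻ q, ENNReal.ofReal (D q) ∂μ := hlintD
        _ = ∫⁻ q in A, ENNReal.ofReal (D q) ∂μ + ∫⁻ q in Aᶜ, ENNReal.ofReal (D q) ∂μ :=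
          hsplit.symm
        _ ≤ μ A + ENNReal.ofReal (ε' / 2) := add_le_add hA1 hA2
    have h3 : ENNReal.ofReal ε' - ENNReal.ofReal (ε' / 2) ≤ μ A :=
      tsub_le_iff_right.2 this
    rwa [← ENNReal.ofReal_sub _ (by positivity), show ε' - ε' / 2 = ε' / 2 by ring] at h3
  -- gap lower bound
  have hgap : ENNReal.ofReal (ε' ^ 3 / 4) ≤
      ∫⁻ q, ENNReal.ofReal (2 * (D q) ^ 2) ∂μ := by
    calc ENNReal.ofReal (ε' ^ 3 / 4)
        = ENNReal.ofReal (ε' ^ 2 / 2) * ENNReal.ofReal (ε' / 2) := by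
          rw [← ENNReal.ofReal_mul (by positivity)]; ring_nf
      _ ≤ ENNReal.ofReal (ε' ^ 2 / 2) * μ A := mul_le_mul_right hμA _
      _ = ∫⁻ _ in A, ENNReal.ofReal (ε' ^ 2 / 2) ∂μ := by
          rw [lintegral_const, Measure.restrict_apply_univ]
      _ ≤ ∫⁻ q in A, ENNReal.ofReal (2 * (D q) ^ 2) ∂μ := by
          refine lintegral_mono_ae ?_
          filter_upwards [ae_restrict_mem hAm] with q hq
          refine ENNReal.ofReal_le_ofReal ?_
          have h1 : ε' / 2 ≤ D q := hq.2
          nlinarith [hε'.le]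
      _ ≤ ∫⁻ q, ENNReal.ofReal (2 * (D q) ^ 2) ∂μ :=
          lintegral_mono' Measure.restrict_le_self le_rfl
  -- pointwise a.e. inequality
  have hfW : ∀ᵐ q ∂μ, q ∈ unitSq \ OmegaSet W₀ → f q.1 q.2 = W₀ q.1 q.2 := by
    have h := (ae_restrict_iff' (hUm.diff hOm)).1 hfW0
    exact h.filter_mono (ae_mono Measure.restrict_le_self)
  have hgW : ∀ᵐ q ∂μ, q ∈ unitSq \ OmegaSet W₀ → g q.1 q.2 = W₀ q.1 q.2 := by
    have h := (ae_restrict_iff' (hUm.diff hOm)).1 hgW0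
    exact h.filter_mono (ae_mono Measure.restrict_le_self)
  have hptwise : ∀ᵐ q ∂μ,
      relEnt (W₀ q.1 q.2) (g q.1 q.2) + ENNReal.ofReal (2 * (D q) ^ 2)
        ≤ relEnt (W₀ q.1 q.2) (f q.1 q.2) := by
    filter_upwards [ae_restrict_mem hUm, hfW, hgW] with q hq hfq hgq
    by_cases hΩ : q ∈ OmegaSet W₀
    · obtain ⟨-, hp0, hp1⟩ := hΩ
      have hord := horder q.1 hq.1 q.2 hq.2
      exact key_pointwise hp0 hp1 hord.1 hord.2 (hfG.2.1 q.1 q.2).2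
    · have h1 := hfq ⟨hq, hΩ⟩
      have h2 := hgq ⟨hq, hΩ⟩
      simp only [hDdef, h1, h2, sub_self]
      norm_num
  -- assemble
  have hhalf : (1 / 2 : ℝ≥0∞) * ENNReal.ofReal (ε' ^ 3 / 4) = ENNReal.ofReal (ε' ^ 3 / 8) := by
    rw [show (1 / 2 : ℝ≥0∞) = ENNReal.ofReal (1 / 2) by
      rw [ENNReal.ofReal_div_of_pos (by norm_num), ENNReal.ofReal_one, ENNReal.ofReal_ofNat]]
    rw [← ENNReal.ofReal_mul (by norm_num)]
    ring_nf
  calc Ient W₀ g + ENNReal.ofReal (ε' ^ 3 / 8)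
      = (1 / 2) * ((∫⁻ q in unitSq, relEnt (W₀ q.1 q.2) (g q.1 q.2)) +
          ENNReal.ofReal (ε' ^ 3 / 4)) := by
        rw [Ient, mul_add, hhalf]
    _ ≤ (1 / 2) * ((∫⁻ q, relEnt (W₀ q.1 q.2) (g q.1 q.2) ∂μ) +
          ∫⁻ q, ENNReal.ofReal (2 * (D q) ^ 2) ∂μ) := by
        exact mul_le_mul_right (add_le_add le_rfl hgap) _
    _ ≤ (1 / 2) * ∫⁻ q, (relEnt (W₀ q.1 q.2) (g q.1 q.2) +
          ENNReal.ofReal (2 * (D q) ^ 2)) ∂μ := by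
        exact mul_le_mul_right (le_lintegral_add _ _) _
    _ ≤ (1 / 2) * ∫⁻ q, relEnt (W₀ q.1 q.2) (f q.1 q.2) ∂μ :=
        mul_le_mul_right (lintegral_mono_ae hptwise) _
    _ = Ient W₀ f := rfl



end GraphonLDP
end
end
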